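/- arXiv:0805.0245 — 8 statements merged into one kernel-verified Lean document; each statement's English description precedes it below -/
import Mathlib

section
/- Let A be a complex n×n matrix with A = P J P⁻¹, where P is invertible and J is the Jordan matrix with diagonal blocks J_{r_1}(λ_1), …, J_{r_m}(λ_m). Then there exists an invertible complex n×n matrix Q such that exp(A) = Q J' Q⁻¹, where J' is the Jordan matrix with diagonal blocks J_{r_1}(e^{λ_1}), …, J_{r_m}(e^{λ_m}). Equivalently, if the elementary divisors of A are (X − λ_1)^{r_1}, …, (X − λ_m)^{r_m}, then the elementary divisors of exp(A) are (X − e^{λ_1})^{r_1}, …, (X − e^{λ_m})^{r_m}. -/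
/-!
Write `J_r(μ) = μ + N` with `N = J_r(0)`, so that `exp J_r(μ) = e^μ + e^μ (exp N - 1)`.
The matrix `e^μ (exp N - 1) = e^μ (N + N²/2! + ⋯)` is strictly upper triangular with nonzero
superdiagonal, so the last basis vector is a cyclic vector for it and it is similar to `N`;
hence `exp J_r(μ)` is similar to `J_r(e^μ)`. Since `exp` commutes with conjugation,
reindexing and block diagonals, the blocks assemble to the claim.
-/

open Matrix

/-- The `r × r` Jordan block `J_r(λ)`. -/
def jordanBlock {R : Type*} [Zero R] [One R] (r : ℕ) (lam : R) :
    Matrix (Fin r) (Fin r) R :=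
  fun i j => if (j : ℕ) = (i : ℕ) then lam else if (j : ℕ) = (i : ℕ) + 1 then 1 else 0

open NormedSpace Finset
open scoped Nat

theorem NormedSpace.exp_eq_sum_of_pow_eq_zero (𝕂 : Type*) {𝔸 : Type*} [Field 𝕂] [CharZero 𝕂]
    [Ring 𝔸] [Algebra 𝕂 𝔸] [TopologicalSpace 𝔸] [IsTopologicalRing 𝔸] [T2Space 𝔸]
    {a : 𝔸} {k : ℕ} (h : a ^ k = 0) :
    exp a = ∑ n ∈ range k, (n !⁻¹ : 𝕂) • a ^ n := by
  rw [exp_eq_tsum 𝕂]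
  refine tsum_eq_sum fun n hn => ?_
  rw [pow_eq_zero_of_le (not_lt.mp (mem_range.not.mp hn)) h, smul_zero]

theorem Pi.isConj {ι : Type*} {M : ι → Type*} [∀ i, Monoid (M i)] {a b : ∀ i, M i}
    (h : ∀ i, IsConj (a i) (b i)) : IsConj a b := by
  choose c hc using h
  exact ⟨MulEquiv.piUnits.symm c, Pi.semiconjBy_iff.2 hc⟩

theorem IsConj.smul_one_add {R A : Type*} [CommSemiring R] [Semiring A] [Algebra R A]
    {a b : A} (h : IsConj a b) (t : R) : IsConj (t • 1 + a) (t • 1 + b) := by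
  obtain ⟨c, hc⟩ := h
  refine ⟨c, SemiconjBy.add_right ?_ hc⟩
  rw [← Algebra.algebraMap_eq_smul_one]
  exact (Algebra.commutes t (c : A)).symm

namespace Matrix

section Conj

variable {n R : Type*} [Fintype n] [DecidableEq n]

theorem isConj_iff_exists_isUnit [CommRing R] {M N : Matrix n n R} :
    IsConj M N ↔ ∃ Q : Matrix n n R, IsUnit Q ∧ N = Q * M * Q⁻¹ := by
  constructor
  · rintro ⟨c, hc⟩
    refine ⟨c, c.isUnit, ?_⟩
    rw [hc.eq, mul_nonsing_inv_cancel_right _ _ ((isUnit_iff_isUnit_det _).mp c.isUnit)]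
  · rintro ⟨Q, hQ, rfl⟩
    refine ⟨hQ.unit, ?_⟩
    rw [SemiconjBy, IsUnit.unit_spec,
      nonsing_inv_mul_cancel_right _ _ ((isUnit_iff_isUnit_det _).mp hQ)]

theorem isConj_exp [NormedRing R] [NormedAlgebra ℚ R] [CompleteSpace R] {M N : Matrix n n R}
    (h : IsConj M N) : IsConj (exp M) (exp N) := by
  obtain ⟨c, hc⟩ := h
  have hN : N = c * M * (c⁻¹ : (Matrix n n R)ˣ) := by rw [hc.eq, Units.mul_inv_cancel_right]
  exact ⟨c, by rw [SemiconjBy, hN, exp_units_conj, Units.inv_mul_cancel_right]⟩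

end Conj

section RCLike

variable {𝕂 : Type*} [RCLike 𝕂]

open scoped Norms.Operator in
theorem exp_reindex {m n : Type*} [Fintype m] [DecidableEq m] [Fintype n] [DecidableEq n]
    (e : m ≃ n) (M : Matrix m m 𝕂) : exp (reindex e e M) = reindex e e (exp M) :=
  (map_exp (reindexAlgEquiv 𝕂 𝕂 e) (continuous_id.matrix_reindex e e) M).symm

open scoped Norms.Operator in
theorem exp_blockDiagonal'_eq_blockDiagonal'_exp {ι : Type*} {n : ι → Type*} [Fintype ι]
    [DecidableEq ι] [∀ i, Fintype (n i)] [∀ i, DecidableEq (n i)]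
    (v : ∀ i, Matrix (n i) (n i) 𝕂) :
    exp (blockDiagonal' v) = blockDiagonal' fun i => exp (v i) := by
  rw [exp_blockDiagonal']
  -- completeness has to be found for the operator-norm uniformity, not the product one
  exact congrArg _ (@Pi.exp_def _ _ _ _ _ (fun _ => inferInstance) v)

open scoped Norms.Operator in
theorem exp_smul_one {n : Type*} [Fintype n] [DecidableEq n] (μ : 𝕂) :
    exp (μ • (1 : Matrix n n 𝕂)) = exp μ • 1 := by
  simp only [← Algebra.algebraMap_eq_smul_one]
  exact (algebraMap_exp_comm μ).symm

end RCLike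

section StrictlyUpperTriangular

variable {R : Type*} [Semiring R] {r : ℕ} {B : Matrix (Fin r) (Fin r) R}

theorem pow_apply_eq_zero_of_lt_add (hB : ∀ i j : Fin r, (j : ℕ) ≤ i → B i j = 0) (k : ℕ)
    {i j : Fin r} (hij : (j : ℕ) < i + k) : (B ^ k) i j = 0 := by
  induction k generalizing j with
  | zero => exact one_apply_ne (by rintro rfl; omega)
  | succ k ih =>
    rw [pow_succ, mul_apply]
    refine sum_eq_zero fun l _ => ?_
    rcases lt_or_ge (l : ℕ) (i + k) with hl | hl
    · rw [ih hl, zero_mul]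
    · rw [hB l j (by omega), mul_zero]

theorem pow_apply_ne_zero_of_eq_add [NoZeroDivisors R] [Nontrivial R]
    (hB : ∀ i j : Fin r, (j : ℕ) ≤ i → B i j = 0)
    (hsup : ∀ i j : Fin r, (j : ℕ) = i + 1 → B i j ≠ 0) (k : ℕ)
    {i j : Fin r} (hij : (j : ℕ) = i + k) : (B ^ k) i j ≠ 0 := by
  induction k generalizing j with
  | zero =>
    obtain rfl : j = i := Fin.ext hij
    simp
  | succ k ih =>
    have hik : (i : ℕ) + k < r := by omega
    rw [pow_succ, mul_apply, sum_eq_single ⟨i + k, hik⟩]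
    · exact mul_ne_zero (ih rfl) (hsup _ _ (by simp only; omega))
    · intro l _ hl
      have hl' : (l : ℕ) ≠ i + k := fun h => hl (Fin.ext h)
      rcases lt_or_gt_of_ne hl' with h | h
      · rw [pow_apply_eq_zero_of_lt_add hB k h, zero_mul]
      · rw [hB l j (by omega), mul_zero]
    · exact fun h => absurd (mem_univ _) h

end StrictlyUpperTriangular

end Matrix

section JordanBlock

theorem jordanBlock_zero_apply {R : Type*} [Zero R] [One R] {r : ℕ} (i j : Fin r) :
    jordanBlock r (0 : R) i j = if (j : ℕ) = i + 1 then 1 else 0 := by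
  unfold jordanBlock
  split_ifs <;> first | rfl | omega

theorem jordanBlock_eq_smul_one_add {R : Type*} [Semiring R] (r : ℕ) (μ : R) :
    jordanBlock r μ = μ • 1 + jordanBlock r 0 := by
  ext i j
  by_cases h : (j : ℕ) = i
  · obtain rfl := Fin.ext h
    simp [jordanBlock]
  · simp [jordanBlock, h, one_apply, Fin.ext_iff, Ne.symm h]

theorem jordanBlock_zero_pow_apply {R : Type*} [Semiring R] {r : ℕ} (k : ℕ) (i j : Fin r) :
    (jordanBlock r (0 : R) ^ k) i j = if (j : ℕ) = i + k then 1 else 0 := by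
  induction k generalizing j with
  | zero => simp [one_apply, Fin.ext_iff, eq_comm]
  | succ k ih =>
    simp only [pow_succ, mul_apply, ih, jordanBlock_zero_apply, ite_mul, one_mul, zero_mul]
    rw [Fin.sum_univ_eq_sum_range
      (fun l => if l = i + k then if (j : ℕ) = l + 1 then (1 : R) else 0 else 0), sum_ite_eq']
    simp only [mem_range]
    have := j.isLt
    split_ifs <;> first | rfl | omega

theorem mul_jordanBlock_zero_apply_zero {m R : Type*} [NonAssocSemiring R] {r : ℕ}
    (M : Matrix m (Fin (r + 1)) R) (i : m) : (M * jordanBlock (r + 1) (0 : R)) i 0 = 0 := by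
  simp [mul_apply, jordanBlock_zero_apply]

theorem mul_jordanBlock_zero_apply_succ {m R : Type*} [NonAssocSemiring R] {r : ℕ}
    (M : Matrix m (Fin (r + 1)) R) (i : m) (j : Fin r) :
    (M * jordanBlock (r + 1) (0 : R)) i j.succ = M i j.castSucc := by
  rw [mul_apply, sum_eq_single j.castSucc]
  · simp [jordanBlock_zero_apply]
  · intro l _ hl
    rw [jordanBlock_zero_apply, if_neg (fun h => hl (Fin.ext (by simp at h ⊢; omega))), mul_zero]
  · exact fun h => absurd (mem_univ _) h

theorem isConj_jordanBlock_zero_of_superdiag_ne_zero {K : Type*} [Field K] {r : ℕ}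
    {B : Matrix (Fin r) (Fin r) K} (hB : ∀ i j : Fin r, (j : ℕ) ≤ i → B i j = 0)
    (hsup : ∀ i j : Fin r, (j : ℕ) = i + 1 → B i j ≠ 0) :
    IsConj (jordanBlock r 0) B := by
  cases r with
  | zero => exact Subsingleton.elim (jordanBlock 0 0) B ▸ IsConj.refl _
  | succ r =>
    -- the cyclic basis `B ^ r e, …, B e, e` generated by the last standard basis vector `e`
    let Q : Matrix (Fin (r + 1)) (Fin (r + 1)) K := of fun i j => (B ^ (r - j)) i (Fin.last r)
    have hQ : IsUnit Q := by
      have htri : Q.IsUpperTriangular := fun i j hji =>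
        pow_apply_eq_zero_of_lt_add hB _ (by simp at hji ⊢; omega)
      rw [isUnit_iff_isUnit_det, det_of_isUpperTriangular htri, isUnit_iff_ne_zero,
        prod_ne_zero_iff]
      exact fun j _ => pow_apply_ne_zero_of_eq_add hB hsup _ (by simp; omega)
    have hBQ (i j) : (B * Q) i j = (B ^ (r - j + 1)) i (Fin.last r) := by
      rw [pow_succ', mul_apply]
      rfl
    refine ⟨hQ.unit, ?_⟩
    ext i j
    rw [IsUnit.unit_spec, hBQ]
    refine Fin.cases ?_ (fun j => ?_) j
    · rw [mul_jordanBlock_zero_apply_zero, pow_apply_eq_zero_of_lt_add hB]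
      simp only [Fin.val_last, Fin.val_zero]
      omega
    · have := j.isLt
      rw [mul_jordanBlock_zero_apply_succ, Fin.val_succ,
        show r - ((j : ℕ) + 1) + 1 = r - j by omega]
      rfl

variable {𝕂 : Type*} [RCLike 𝕂]

theorem exp_jordanBlock_zero_apply {r : ℕ} (i j : Fin r) :
    exp (jordanBlock r (0 : 𝕂)) i j = if (i : ℕ) ≤ j then (((j - i : ℕ)! : 𝕂))⁻¹ else 0 := by
  have hnil : jordanBlock r (0 : 𝕂) ^ r = 0 := by
    ext k l
    rw [jordanBlock_zero_pow_apply, if_neg (by omega), Matrix.zero_apply]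
  rw [exp_eq_sum_of_pow_eq_zero 𝕂 hnil, Matrix.sum_apply]
  simp only [Matrix.smul_apply, jordanBlock_zero_pow_apply, smul_eq_mul, mul_ite, mul_one,
    mul_zero]
  by_cases hij : (i : ℕ) ≤ j
  · rw [if_pos hij, sum_eq_single (j - i : ℕ)]
    · rw [if_pos (by omega)]
    · intro n _ hn
      rw [if_neg (by omega)]
    · exact fun h => absurd (mem_range.2 (by omega)) h
  · rw [if_neg hij]
    exact sum_eq_zero fun n _ => if_neg (by omega)

theorem exp_jordanBlock (r : ℕ) (μ : 𝕂) :
    exp (jordanBlock r μ) = exp μ • 1 + exp μ • (exp (jordanBlock r 0) - 1) := by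
  rw [jordanBlock_eq_smul_one_add r μ,
    Matrix.exp_add_of_commute _ _ ((Commute.one_left _).smul_left μ), exp_smul_one,
    smul_mul_assoc, one_mul, smul_sub, add_sub_cancel]

theorem isConj_exp_jordanBlock (r : ℕ) (μ : 𝕂) :
    IsConj (jordanBlock r (exp μ)) (exp (jordanBlock r μ)) := by
  rw [exp_jordanBlock, jordanBlock_eq_smul_one_add]
  refine (isConj_jordanBlock_zero_of_superdiag_ne_zero (fun i j hji => ?_)
    (fun i j hji => ?_)).smul_one_add _
  · rw [Matrix.smul_apply, Matrix.sub_apply, exp_jordanBlock_zero_apply]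
    rcases hji.lt_or_eq with hji | hji
    · rw [if_neg (by omega), one_apply_ne (fun h => by subst h; omega), sub_zero, smul_zero]
    · obtain rfl : j = i := Fin.ext hji
      simp
  · rw [Matrix.smul_apply, Matrix.sub_apply, exp_jordanBlock_zero_apply, if_pos (by omega),
      one_apply_ne (fun h => by subst h; omega), hji]
    simpa using (isUnit_exp μ).ne_zero

end JordanBlock

/-- **The Jordan structure is preserved by the matrix exponential.**
If `A = P J P⁻¹` where `J` is the Jordan matrix with blocks `J_{r_1}(λ_1), …, J_{r_m}(λ_m)`,
then there is an invertible `Q` with `exp A = Q J' Q⁻¹`, where `J'` is the Jordan matrix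
with blocks `J_{r_1}(e^{λ_1}), …, J_{r_m}(e^{λ_m})`. -/
theorem exp_jordan_form (n : ℕ) (A : Matrix (Fin n) (Fin n) ℂ)
    (m : ℕ) (r : Fin m → ℕ) (lam : Fin m → ℂ)
    (e : (Σ k : Fin m, Fin (r k)) ≃ Fin n)
    (P : Matrix (Fin n) (Fin n) ℂ) (hP : IsUnit P)
    (hA : A = P * (Matrix.reindex e e
        (Matrix.blockDiagonal' (fun k => jordanBlock (r k) (lam k)))) * P⁻¹) :
    ∃ Q : Matrix (Fin n) (Fin n) ℂ, IsUnit Q ∧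
      NormedSpace.exp A = Q * (Matrix.reindex e e
        (Matrix.blockDiagonal' (fun k => jordanBlock (r k) (Complex.exp (lam k))))) * Q⁻¹ := by
  have hA' : IsConj (reindex e e (blockDiagonal' fun k => jordanBlock (r k) (lam k))) A :=
    isConj_iff_exists_isUnit.2 ⟨P, hP, hA⟩
  have hexp := isConj_exp hA'
  rw [exp_reindex, exp_blockDiagonal'_eq_blockDiagonal'_exp] at hexp
  have hblocks : IsConj (blockDiagonal' fun k => jordanBlock (r k) (Complex.exp (lam k)))
      (blockDiagonal' fun k => exp (jordanBlock (r k) (lam k))) := by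
    have hk (k : Fin m) := isConj_exp_jordanBlock (r k) (lam k)
    simp only [← Complex.exp_eq_exp_ℂ] at hk
    exact (blockDiagonal'RingHom _ ℂ).toMonoidHom.map_isConj (Pi.isConj hk)
  exact isConj_iff_exists_isUnit.1
    (((reindexAlgEquiv ℂ ℂ e).toMonoidHom.map_isConj hblocks).trans hexp)
end

section
/- For every invertible n×n matrix A (over ℝ or ℂ) there exist a semisimple matrix S and a unipotent matrix U such that A = S U and S U = U S; moreover, S and U with these properties are unique. -/
open Matrix

/-- A complex square matrix is semisimple iff it is diagonalizable over `ℂ`. -/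
def IsSemisimpleMatC {n : ℕ} (S : Matrix (Fin n) (Fin n) ℂ) : Prop :=
  ∃ P D : Matrix (Fin n) (Fin n) ℂ, IsUnit P ∧ D.IsDiag ∧ S = P * D * P⁻¹

/-- A real square matrix is semisimple iff it is diagonalizable over `ℂ`. -/
def IsSemisimpleMatR {n : ℕ} (S : Matrix (Fin n) (Fin n) ℝ) : Prop :=
  IsSemisimpleMatC (S.map (algebraMap ℝ ℂ))

/-!
Over a perfect field the Jordan–Chevalley decomposition `A = N + S` (nilpotent plus semisimple,
commuting, unique) becomes the multiplicative one: if `A` is invertible then so is `S = A - N`, and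
`U = S⁻¹ A = 1 + S⁻¹ N` is unipotent; conversely `S U = S (U - 1) + S` recovers an additive
decomposition, so uniqueness carries over.

Over `ℂ`, semisimple means diagonalizable because the eigenvectors of a semisimple endomorphism
span. A real matrix is semisimple over `ℝ` iff it is over `ℂ`: a squarefree real annihilating
polynomial stays squarefree over `ℂ`, and conversely the real Jordan–Chevalley decomposition is
still one over `ℂ`, where uniqueness forces its nilpotent part to vanish.
-/

open Polynomial Module

namespace Module.End

universe v
variable {K : Type*} {V : Type v} [Field K] [AddCommGroup V] [Module K V] {f : End K V}

theorem exists_basis_apply_eq_smul_of_iSup_eigenspace_eq_top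
    (h : ⨆ μ, f.eigenspace μ = ⊤) :
    ∃ (ι : Type v) (b : Basis ι K V) (μ : ι → K), ∀ i, f (b i) = μ i • b i := by
  have hspan : ⊤ ≤ Submodule.span K (⋃ μ, (f.eigenspace μ : Set V)) := by
    rw [← Submodule.iSup_eq_span, h]
  have hb (i) : ∃ μ : K, f (Basis.ofSpan hspan i) = μ • Basis.ofSpan hspan i := by
    obtain ⟨μ, hμ⟩ := Set.mem_iUnion.mp (Basis.ofSpan_subset hspan ⟨i, rfl⟩)
    exact ⟨μ, mem_eigenspace_iff.mp hμ⟩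
  choose μ hμ using hb
  exact ⟨_, _, μ, hμ⟩

end Module.End

namespace Matrix

section Field

variable {n K : Type*} [Fintype n] [DecidableEq n] [Field K]

theorem eq_mul_diagonal_mul_inv_of_basis (M : Matrix n n K) (b : Basis n K (n → K))
    (μ : n → K) (hb : ∀ i, M *ᵥ b i = μ i • b i) :
    M = (Pi.basisFun K n).toMatrix b * diagonal μ * ((Pi.basisFun K n).toMatrix b)⁻¹ := by
  have := (Pi.basisFun K n).invertibleToMatrix b
  have hcols : M * (Pi.basisFun K n).toMatrix b = (Pi.basisFun K n).toMatrix b * diagonal μ := by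
    ext i j
    rw [mul_diagonal]
    simpa [Basis.toMatrix_apply, mulVec, dotProduct, mul_apply, mul_comm]
      using congrFun (hb j) i
  rw [← hcols, mul_inv_cancel_right_of_invertible]

theorem isSemisimple_toLin'_conj {P : Matrix n n K} (hP : IsUnit P) (M : Matrix n n K) :
    End.IsSemisimple (toLin' (P * M * P⁻¹)) ↔ End.IsSemisimple (toLin' M) := by
  have := hP.invertible
  refine (LinearEquiv.isSemisimple_iff _ _ (toLinearEquiv' P this) (LinearMap.ext fun v => ?_)).symm
  simp [toLinearEquiv'_apply, mulVec_mulVec, Matrix.mul_assoc]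

theorem isSemisimple_toLin'_of_squarefree_aeval_eq_zero {M : Matrix n n K} {p : K[X]}
    (hp : Squarefree p) (hM : aeval M p = 0) : End.IsSemisimple (toLin' M) :=
  End.isSemisimple_of_squarefree_aeval_eq_zero hp <| by
    change aeval (toLinAlgEquiv' M) p = 0
    rw [aeval_algEquiv, AlgHom.comp_apply, hM, map_zero]

theorem isSemisimple_toLin'_diagonal (d : n → K) : End.IsSemisimple (toLin' (diagonal d)) := by
  classical
  refine isSemisimple_toLin'_of_squarefree_aeval_eq_zero
    (p := ∏ μ ∈ Finset.univ.image d, (X - C μ))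
    (separable_prod_X_sub_C_iff'.mpr fun _ _ _ _ h => h).squarefree ?_
  suffices aeval d (∏ μ ∈ Finset.univ.image d, (X - C μ)) = 0 by
    rw [← diagonalAlgHom_apply (R := K), aeval_algHom_apply, this, map_zero]
  funext i
  rw [aeval_pi_apply₂, map_prod]
  exact Finset.prod_eq_zero (Finset.mem_image_of_mem _ (Finset.mem_univ i)) (by simp)

theorem IsDiag.isSemisimple_toLin' {D : Matrix n n K} (hD : D.IsDiag) :
    End.IsSemisimple (toLin' D) :=
  hD.diagonal_diag ▸ isSemisimple_toLin'_diagonal D.diag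

theorem isSemisimple_toLin'_iff_exists_isDiag [IsAlgClosed K] {M : Matrix n n K} :
    End.IsSemisimple (toLin' M) ↔
      ∃ P D : Matrix n n K, IsUnit P ∧ D.IsDiag ∧ M = P * D * P⁻¹ := by
  constructor
  · intro h
    obtain ⟨ι, b, μ, hb⟩ :=
      End.exists_basis_apply_eq_smul_of_iSup_eigenspace_eq_top h.iSup_eigenspace_eq_top
    let e := b.indexEquiv (Pi.basisFun K n)
    have := (Pi.basisFun K n).invertibleToMatrix (b.reindex e)
    refine ⟨_, _, isUnit_of_invertible _, isDiag_diagonal _,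
      eq_mul_diagonal_mul_inv_of_basis M (b.reindex e) (μ ∘ e.symm) fun i => ?_⟩
    simpa using hb (e.symm i)
  · rintro ⟨P, D, hP, hD, rfl⟩
    exact (isSemisimple_toLin'_conj hP D).mpr hD.isSemisimple_toLin'

end Field

section PerfectField

variable {n K : Type*} [Fintype n] [DecidableEq n] [Field K] [PerfectField K]

theorem exists_isNilpotent_isSemisimple (M : Matrix n n K) :
    ∃ N S : Matrix n n K, IsNilpotent N ∧ End.IsSemisimple (toLin' S) ∧ Commute N S ∧
      M = N + S := by
  obtain ⟨N, hN, S, hS, hN_nil, hS_ss, hM⟩ :=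
    End.exists_isNilpotent_isSemisimple (f := toLin' M)
  have hNS : Commute N S := Algebra.commute_of_mem_adjoin_singleton_of_commute hS
    (Algebra.commute_of_mem_adjoin_self hN).symm
  refine ⟨LinearMap.toMatrix' N, LinearMap.toMatrix' S, hN_nil.map LinearMap.toMatrixAlgEquiv',
    by simpa using hS_ss, hNS.map LinearMap.toMatrixAlgEquiv', toLin'.injective ?_⟩
  simp [hM]

theorem isNilpotent_isSemisimple_unique {N₁ S₁ N₂ S₂ : Matrix n n K}
    (hN₁ : IsNilpotent N₁) (hS₁ : End.IsSemisimple (toLin' S₁))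
    (hN₂ : IsNilpotent N₂) (hS₂ : End.IsSemisimple (toLin' S₂))
    (hc₁ : Commute N₁ S₁) (hc₂ : Commute N₂ S₂) (h : N₁ + S₁ = N₂ + S₂) :
    N₁ = N₂ ∧ S₁ = S₂ := by
  have := End.isNilpotent_isSemisimple_unique (hN₁.map toLinAlgEquiv') hS₁
    (hN₂.map toLinAlgEquiv') hS₂ (hc₁.map toLinAlgEquiv') (hc₂.map toLinAlgEquiv')
    (by change toLin' N₁ + toLin' S₁ = toLin' N₂ + toLin' S₂; rw [← map_add, h, map_add])
  simpa using this

theorem existsUnique_semisimple_mul_unipotent {M : Matrix n n K} (hM : IsUnit M) :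
    ∃! p : Matrix n n K × Matrix n n K, End.IsSemisimple (toLin' p.1) ∧
      IsNilpotent (p.2 - 1) ∧ M = p.1 * p.2 ∧ p.1 * p.2 = p.2 * p.1 := by
  obtain ⟨N, S, hN, hS, hNS, rfl⟩ := M.exists_isNilpotent_isSemisimple
  obtain ⟨s, rfl⟩ : IsUnit S := by
    simpa using hN.neg.isUnit_add_left_of_commute hM ((Commute.refl N).add_right hNS).neg_left
  have hU : (↑s⁻¹ : Matrix n n K) * (N + s) - 1 = (↑s⁻¹ : Matrix n n K) * N := by
    rw [mul_add, Units.inv_mul, add_sub_cancel_right]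
  have hU_nil : IsNilpotent ((↑s⁻¹ : Matrix n n K) * (N + s) - 1) :=
    hU ▸ hNS.units_inv_right.symm.isNilpotent_mul_left hN
  refine ⟨((s : Matrix n n K), (↑s⁻¹ : Matrix n n K) * (N + s)), ⟨hS, hU_nil, ?_, ?_⟩,
    ?_⟩
  · exact (Units.mul_inv_cancel_left s _).symm
  · rw [Units.mul_inv_cancel_left, mul_assoc, (hNS.add_left (Commute.refl _)).eq,
      Units.inv_mul_cancel_left]
  · rintro ⟨S', U'⟩ ⟨hS', hU', hM', hc' : Commute S' U'⟩
    dsimp only at hS' hU' hM'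
    have hN' : IsNilpotent (S' * (U' - 1)) :=
      (hc'.sub_right (Commute.one_right S')).isNilpotent_mul_left hU'
    have hN'S' : Commute (S' * (U' - 1)) S' :=
      (Commute.refl S').mul_left (hc'.symm.sub_left (Commute.one_left S'))
    obtain rfl : S' = ↑s := (isNilpotent_isSemisimple_unique hN' hS' hN hS hN'S' hNS
      (by rw [mul_sub, mul_one, sub_add_cancel, hM'])).2
    exact Prod.ext rfl ((Units.eq_inv_mul_iff_mul_eq s).2 hM'.symm)

variable {L : Type*} [Field L] [Algebra K L]

theorem isSemisimple_toLin'_map_algebraMap {M : Matrix n n K}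
    (hM : End.IsSemisimple (toLin' M)) :
    End.IsSemisimple (toLin' (M.map (algebraMap K L))) := by
  have hsep : (minpoly K M).Separable := PerfectField.separable_iff_squarefree.mpr <| by
    simpa [minpoly_toLin'] using hM.minpoly_squarefree
  refine isSemisimple_toLin'_of_squarefree_aeval_eq_zero
    (p := (minpoly K M).map (algebraMap K L)) hsep.map.squarefree ?_
  rw [aeval_map_algebraMap]
  change aeval ((Algebra.ofId K L).mapMatrix M) (minpoly K M) = 0
  rw [aeval_algHom_apply, minpoly.aeval, map_zero]

theorem isSemisimple_toLin'_map_algebraMap_iff [PerfectField L] {M : Matrix n n K} :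
    End.IsSemisimple (toLin' (M.map (algebraMap K L))) ↔ End.IsSemisimple (toLin' M) := by
  refine ⟨fun hM => ?_, isSemisimple_toLin'_map_algebraMap⟩
  obtain ⟨N, S, hN, hS, hNS, rfl⟩ := M.exists_isNilpotent_isSemisimple
  have hS_eq : S.map (algebraMap K L) = (N + S).map (algebraMap K L) :=
    (isNilpotent_isSemisimple_unique (hN.map (algebraMap K L).mapMatrix)
      (isSemisimple_toLin'_map_algebraMap hS) .zero hM (hNS.map (algebraMap K L).mapMatrix)
      (.zero_left _) (by simp [Matrix.map_add])).2
  rwa [← map_injective (algebraMap K L).injective hS_eq]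

end PerfectField

end Matrix

theorem isSemisimpleMatC_iff {n : ℕ} {S : Matrix (Fin n) (Fin n) ℂ} :
    IsSemisimpleMatC S ↔ End.IsSemisimple (toLin' S) :=
  isSemisimple_toLin'_iff_exists_isDiag.symm

theorem isSemisimpleMatR_iff {n : ℕ} {S : Matrix (Fin n) (Fin n) ℝ} :
    IsSemisimpleMatR S ↔ End.IsSemisimple (toLin' S) :=
  isSemisimpleMatC_iff.trans isSemisimple_toLin'_map_algebraMap_iff

/-- **Multiplicative Jordan decomposition.** Every invertible `n × n` matrix over `ℝ`
or `ℂ` is uniquely the product `A = S U` of a semisimple matrix `S` and a unipotent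
matrix `U` with `S U = U S`. -/
theorem multiplicative_jordan_decomposition (n : ℕ) :
    (∀ A : Matrix (Fin n) (Fin n) ℝ, IsUnit A →
      ∃! p : Matrix (Fin n) (Fin n) ℝ × Matrix (Fin n) (Fin n) ℝ,
        IsSemisimpleMatR p.1 ∧ IsNilpotent (p.2 - 1) ∧
          A = p.1 * p.2 ∧ p.1 * p.2 = p.2 * p.1) ∧
    (∀ A : Matrix (Fin n) (Fin n) ℂ, IsUnit A →
      ∃! p : Matrix (Fin n) (Fin n) ℂ × Matrix (Fin n) (Fin n) ℂ,
        IsSemisimpleMatC p.1 ∧ IsNilpotent (p.2 - 1) ∧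
          A = p.1 * p.2 ∧ p.1 * p.2 = p.2 * p.1) := by
  constructor
  · intro A hA
    simpa only [isSemisimpleMatR_iff] using existsUnique_semisimple_mul_unipotent hA
  · intro A hA
    simpa only [isSemisimpleMatC_iff] using existsUnique_semisimple_mul_unipotent hA
end

section
/- Let S₁ and S₂ be two (real or complex) n×n matrices that are semisimple (diagonalizable over ℂ) and such that every eigenvalue λ + iμ of S₁ and of S₂ satisfies −π < μ ≤ π. If exp(S₁) = exp(S₂), then S₁ = S₂. -/
open Matrix

/-- `z` is a (complex) eigenvalue of the complex matrix `S`. -/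
def eigC {n : ℕ} (S : Matrix (Fin n) (Fin n) ℂ) (z : ℂ) : Prop :=
  S.charpoly.IsRoot z

/-- `z` is a (complex) eigenvalue of the real matrix `S`. -/
def eigR {n : ℕ} (S : Matrix (Fin n) (Fin n) ℝ) (z : ℂ) : Prop :=
  (S.charpoly.map (algebraMap ℝ ℂ)).IsRoot z

/-!
`Complex.log` inverts `exp` on the strip `-π < Im z ≤ π`, so `exp` is injective on the finite
set `s` of eigenvalues of `S₁` and `S₂`, and Lagrange interpolation gives a polynomial `p` with
`p (exp z) = z` on `s`. For a diagonalizable `S = P D P⁻¹` with spectrum in `s`,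
`p (exp S) = P p(exp D) P⁻¹ = S`; hence `S₁ = p (exp S₁) = p (exp S₂) = S₂`. The real case
reduces to the complex one, since complexification commutes with `exp` and `charpoly`.
-/

open Polynomial NormedSpace

namespace Matrix

variable {m R : Type*} [Fintype m] [DecidableEq m] [CommRing R]

theorem aeval_conj {P : Matrix m m R} (hP : IsUnit P) (A : Matrix m m R) (p : R[X]) :
    aeval (P * A * P⁻¹) p = P * aeval A p * P⁻¹ := by
  lift P to (Matrix m m R)ˣ using hP
  rw [← coe_units_inv]
  exact aeval_algHom_apply (MulSemiringAction.toAlgHom R _ (ConjAct.toConjAct P)) A p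

theorem aeval_diagonal (d : m → R) (p : R[X]) :
    aeval (diagonal d) p = diagonal fun i ↦ p.eval (d i) := by
  rw [← diagonalAlgHom_apply (R := R), aeval_algHom_apply, aeval_pi_apply]
  rfl

theorem isRoot_charpoly_conj_diagonal {P : Matrix m m R} (hP : IsUnit P) (d : m → R) (i : m) :
    (P * diagonal d * P⁻¹).charpoly.IsRoot (d i) := by
  lift P to (Matrix m m R)ˣ using hP
  rw [charpoly_units_conj, charpoly_diagonal, IsRoot, eval_prod]
  exact Finset.prod_eq_zero (Finset.mem_univ i) (by simp)

theorem map_exp {𝔸 𝔹 : Type*} [NormedRing 𝔸] [NormedAlgebra ℚ 𝔸] [CompleteSpace 𝔸]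
    [NormedRing 𝔹] [Algebra ℚ 𝔹] (f : 𝔸 →+* 𝔹) (hf : Continuous f)
    (A : Matrix m m 𝔸) : (exp A).map f = exp (A.map f) := by
  open scoped Norms.Operator in
  -- the operator-norm uniformity is only defeq, not reducibly equal, to the entrywise one
  have : @CompleteSpace (Matrix m m 𝔸) PseudoMetricSpace.toUniformSpace := by
    exact (inferInstance : CompleteSpace (Matrix m m 𝔸))
  exact NormedSpace.map_exp f.mapMatrix (continuous_id.matrix_map hf) A

end Matrix

theorem Complex.injOn_exp_of_im_mem_Ioc : Set.InjOn exp (im ⁻¹' Set.Ioc (-Real.pi) Real.pi) :=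
  Set.LeftInvOn.injOn (f₁' := log) fun _ hz ↦ log_exp hz.1 hz.2

variable {n : ℕ}

theorem IsSemisimpleMatC.exists_conj_diagonal {S : Matrix (Fin n) (Fin n) ℂ}
    (h : IsSemisimpleMatC S) : ∃ P d, IsUnit P ∧ S = P * diagonal d * P⁻¹ := by
  obtain ⟨P, D, hP, hD, rfl⟩ := h
  exact ⟨P, D.diag, hP, by rw [hD.diagonal_diag]⟩

theorem aeval_exp_conj_diagonal {m : Type*} [Fintype m] [DecidableEq m] {s : Finset ℂ}
    (hs : Set.InjOn Complex.exp s) {P : Matrix m m ℂ} (hP : IsUnit P) {d : m → ℂ}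
    (hd : ∀ i, d i ∈ s) :
    aeval (exp (P * diagonal d * P⁻¹)) (Lagrange.interpolate s Complex.exp id) =
      P * diagonal d * P⁻¹ := by
  rw [exp_conj _ _ hP, exp_diagonal, aeval_conj hP, aeval_diagonal]
  congr
  funext i
  rw [Pi.coe_exp, ← Complex.exp_eq_exp_ℂ]
  exact Lagrange.eval_interpolate_at_node id hs (hd i)

theorem eq_of_exp_eq_of_isSemisimpleMatC {S₁ S₂ : Matrix (Fin n) (Fin n) ℂ}
    (h₁ : IsSemisimpleMatC S₁) (h₂ : IsSemisimpleMatC S₂)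
    (he₁ : ∀ z : ℂ, eigC S₁ z → -Real.pi < z.im ∧ z.im ≤ Real.pi)
    (he₂ : ∀ z : ℂ, eigC S₂ z → -Real.pi < z.im ∧ z.im ≤ Real.pi)
    (hexp : exp S₁ = exp S₂) : S₁ = S₂ := by
  obtain ⟨P₁, d₁, hP₁, rfl⟩ := h₁.exists_conj_diagonal
  obtain ⟨P₂, d₂, hP₂, rfl⟩ := h₂.exists_conj_diagonal
  set s := Finset.univ.image d₁ ∪ Finset.univ.image d₂
  have hd₁ (i : Fin n) : d₁ i ∈ s := Finset.mem_union_left _ (by simp)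
  have hd₂ (i : Fin n) : d₂ i ∈ s := Finset.mem_union_right _ (by simp)
  have hs : Set.InjOn Complex.exp s := by
    refine Complex.injOn_exp_of_im_mem_Ioc.mono fun z hz ↦ ?_
    simp only [s, Finset.coe_union, Finset.coe_image, Finset.coe_univ, Set.image_univ] at hz
    rcases hz with ⟨i, rfl⟩ | ⟨i, rfl⟩
    exacts [he₁ _ (isRoot_charpoly_conj_diagonal hP₁ d₁ i),
      he₂ _ (isRoot_charpoly_conj_diagonal hP₂ d₂ i)]
  calc P₁ * diagonal d₁ * P₁⁻¹
      = aeval (exp (P₁ * diagonal d₁ * P₁⁻¹)) (Lagrange.interpolate s Complex.exp id) :=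
        (aeval_exp_conj_diagonal hs hP₁ hd₁).symm
    _ = P₂ * diagonal d₂ * P₂⁻¹ := by rw [hexp, aeval_exp_conj_diagonal hs hP₂ hd₂]

theorem eigC_map_algebraMap_iff {S : Matrix (Fin n) (Fin n) ℝ} {z : ℂ} :
    eigC (S.map (algebraMap ℝ ℂ)) z ↔ eigR S z := by
  rw [eigC, eigR, charpoly_map]

theorem eq_of_exp_eq_of_isSemisimpleMatR {S₁ S₂ : Matrix (Fin n) (Fin n) ℝ}
    (h₁ : IsSemisimpleMatR S₁) (h₂ : IsSemisimpleMatR S₂)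
    (he₁ : ∀ z : ℂ, eigR S₁ z → -Real.pi < z.im ∧ z.im ≤ Real.pi)
    (he₂ : ∀ z : ℂ, eigR S₂ z → -Real.pi < z.im ∧ z.im ≤ Real.pi)
    (hexp : exp S₁ = exp S₂) : S₁ = S₂ := by
  refine map_injective (algebraMap ℝ ℂ).injective <| eq_of_exp_eq_of_isSemisimpleMatC h₁ h₂
    (fun z hz ↦ he₁ z (eigC_map_algebraMap_iff.mp hz))
    (fun z hz ↦ he₂ z (eigC_map_algebraMap_iff.mp hz)) ?_
  simp only [← Matrix.map_exp _ (continuous_algebraMap ℝ ℂ), hexp]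

/-- **Injectivity of `exp` on semisimple matrices with spectrum in the strip
`−π < Im ≤ π`.** If `S₁, S₂` (real or complex `n × n`) are semisimple, all their
eigenvalues `λ + iμ` satisfy `−π < μ ≤ π`, and `exp S₁ = exp S₂`, then `S₁ = S₂`. -/
theorem exp_injective_on_semisimple_strip (n : ℕ) :
    (∀ S₁ S₂ : Matrix (Fin n) (Fin n) ℝ,
      IsSemisimpleMatR S₁ → IsSemisimpleMatR S₂ →
      (∀ z : ℂ, eigR S₁ z → -Real.pi < z.im ∧ z.im ≤ Real.pi) →
      (∀ z : ℂ, eigR S₂ z → -Real.pi < z.im ∧ z.im ≤ Real.pi) →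
      NormedSpace.exp S₁ = NormedSpace.exp S₂ → S₁ = S₂) ∧
    (∀ S₁ S₂ : Matrix (Fin n) (Fin n) ℂ,
      IsSemisimpleMatC S₁ → IsSemisimpleMatC S₂ →
      (∀ z : ℂ, eigC S₁ z → -Real.pi < z.im ∧ z.im ≤ Real.pi) →
      (∀ z : ℂ, eigC S₂ z → -Real.pi < z.im ∧ z.im ≤ Real.pi) →
      NormedSpace.exp S₁ = NormedSpace.exp S₂ → S₁ = S₂) :=
  ⟨fun _ _ ↦ eq_of_exp_eq_of_isSemisimpleMatR, fun _ _ ↦ eq_of_exp_eq_of_isSemisimpleMatC⟩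
end

section
/- Let S(n) denote the set of real n×n matrices all of whose eigenvalues λ + iμ (complex roots of the characteristic polynomial) satisfy −π < μ < π. Then the exponential map is injective on S(n): if X₁, X₂ ∈ S(n) and exp(X₁) = exp(X₂), then X₁ = X₂. -/
open Matrix

/-!
Complexify and let `A` be a complex matrix with spectrum in a set `S` on which `Complex.exp` is
injective, `B = exp A`. On the generalized eigenspace `V_μ(A)` we have `B = e^μ exp(A - μ)` with
`A - μ` nilpotent, so `V_μ(A) ⊆ V_{e^μ}(B)`; injectivity of `exp` on `S` and the direct sum
decompositions of `ℂⁿ` for `A` and for `B` upgrade this to `V_μ(A) = V_{e^μ}(B)`. On that space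
`A = μ + ψ(e^{-μ} B - 1)`, where the polynomial `ψ` is a truncated logarithm (a compositional
inverse of the truncated `exp - 1` modulo a high power of `X`). So `A` is determined by `B`.
For real matrices with eigenvalues in the strip `|Im z| < π`, `S` is that strip.
-/

open Polynomial

namespace Polynomial

variable {R : Type*} [CommRing R]

theorem X_pow_succ_dvd_pow_sub_X_pow {φ : R[X]} (hφ : X ^ 2 ∣ φ - X) (m : ℕ) :
    X ^ (m + 1) ∣ φ ^ m - X ^ m := by
  obtain ⟨h, hh⟩ := hφ
  have hφ' : φ = X * (X * h + 1) := by linear_combination hh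
  have hu : φ ^ m - X ^ m = X ^ m * ((X * h + 1) ^ m - 1 ^ m) := by
    rw [hφ', mul_pow]; ring
  rw [hu, pow_succ]
  refine mul_dvd_mul_left _ ((dvd_mul_right X h).trans ?_)
  have := sub_dvd_pow_sub_pow (X * h + 1) 1 m
  rwa [add_sub_cancel_right] at this

/-- Each step removes the lowest error term `c X ^ m` by subtracting `c X ^ m` from `ψ`, which
changes `ψ.comp φ` by `c φ ^ m ≡ c X ^ m` modulo `X ^ (m + 1)`. -/
theorem exists_X_pow_dvd_comp_sub_X {φ : R[X]} (hφ : X ^ 2 ∣ φ - X) (m : ℕ) :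
    ∃ ψ : R[X], X ^ m ∣ ψ.comp φ - X := by
  induction m with
  | zero => exact ⟨X, by simp⟩
  | succ m ih =>
    obtain ⟨ψ, E, hE⟩ := ih
    refine ⟨ψ - C (E.coeff 0) * X ^ m, ?_⟩
    have hcomp : (ψ - C (E.coeff 0) * X ^ m).comp φ - X
        = X ^ m * (E - C (E.coeff 0)) - C (E.coeff 0) * (φ ^ m - X ^ m) := by
      simp only [sub_comp, mul_comp, C_comp, X_pow_comp]
      linear_combination hE
    rw [hcomp, pow_succ]
    exact dvd_sub (mul_dvd_mul_left _ X_dvd_sub_C)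
      ((X_pow_succ_dvd_pow_sub_X_pow hφ m).mul_left _)

end Polynomial

namespace PowerSeries

variable {A : Type*} [CommRing A] [Algebra ℚ A]

theorem X_sq_dvd_trunc_exp_sub_one_sub_X {d : ℕ} (hd : 2 ≤ d) :
    (Polynomial.X : A[X]) ^ 2 ∣ trunc d (exp A) - 1 - Polynomial.X := by
  rw [Polynomial.X_pow_dvd_iff]
  intro j hj
  interval_cases j <;>
    simp [coeff_trunc, Polynomial.coeff_one, Polynomial.coeff_X, show 0 < d by omega,
      show 1 < d by omega]

theorem X_pow_dvd_trunc_exp_sub_one_pow (d : ℕ) :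
    (Polynomial.X : A[X]) ^ d ∣ (trunc d (exp A) - 1) ^ d := by
  cases d with
  | zero => simp
  | succ d =>
    refine pow_dvd_pow_of_dvd ?_ _
    rw [Polynomial.X_dvd_iff]
    simp [coeff_trunc]

end PowerSeries

namespace Module.End

section CommRing

variable {R V : Type*} [CommRing R] [AddCommGroup V] [Module R V]

theorem aeval_apply_eq_of_eqOn {f g : End R V} {p : Submodule R V} (hg : ∀ x ∈ p, g x ∈ p)
    (hfg : ∀ x ∈ p, f x = g x) (q : R[X]) : ∀ x ∈ p, aeval f q x = aeval g q x := by
  induction q using Polynomial.induction_on with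
  | C a => simp
  | add q r hq hr => intro x hx; simp [hq x hx, hr x hx]
  | monomial k a ih =>
    intro x hx
    rw [pow_succ, ← mul_assoc, map_mul (aeval f), map_mul (aeval g), aeval_X, aeval_X,
      mul_apply, mul_apply, hfg x hx, ih _ (hg x hx)]

theorem aeval_apply_eq_zero_of_X_pow_dvd {N : End R V} {k : ℕ} {x : V}
    (hx : x ∈ LinearMap.ker (N ^ k)) {s : R[X]} (hs : X ^ k ∣ s) : aeval N s x = 0 := by
  obtain ⟨s, rfl⟩ := hs
  rw [mul_comm, map_mul, map_pow, aeval_X, mul_apply, LinearMap.mem_ker.mp hx, map_zero]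

theorem aeval_apply_eq_aeval_comp_of_eqOn_ker_pow {N u : End R V} {k : ℕ} {r : R[X]}
    (hu : ∀ x ∈ LinearMap.ker (N ^ k), u x = aeval N r x) (q : R[X]) :
    ∀ x ∈ LinearMap.ker (N ^ k), aeval u q x = aeval N (q.comp r) x := by
  have hcomm : Commute (N ^ k) (aeval N r) := by
    simpa using (Commute.all (X ^ k) r).map (aeval N)
  rw [aeval_comp]
  refine aeval_apply_eq_of_eqOn (fun x hx => ?_) hu q
  rw [LinearMap.mem_ker, ← mul_apply, hcomm.eq, mul_apply, LinearMap.mem_ker.mp hx, map_zero]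

end CommRing

section IsAlgClosed

variable {K V : Type*} [Field K] [IsAlgClosed K] [AddCommGroup V] [Module K V]
  [FiniteDimensional K V]

/-- Write `v` along the generalized eigenspaces of `f`: the components `V_ν(f)` with
`φ ν ≠ φ μ` land in generalized eigenspaces of `g` other than `V_{φ μ}(g)`, so they vanish by
independence, and the remaining ones all have `ν = μ`. -/
theorem maxGenEigenspace_le_of_injOn {f g : End K V} {φ : K → K} {S : Set K}
    (hS : ∀ μ, f.HasEigenvalue μ → μ ∈ S) (hφ : S.InjOn φ)
    (hfg : ∀ μ, f.maxGenEigenspace μ ≤ g.maxGenEigenspace (φ μ)) {μ : K} (hμ : μ ∈ S) :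
    g.maxGenEigenspace (φ μ) ≤ f.maxGenEigenspace μ := by
  intro v hv
  have htop : v ∈ ⨆ ν, f.maxGenEigenspace ν := by
    rw [iSup_maxGenEigenspace_eq_top]; trivial
  rw [iSup_split _ (fun ν => φ ν = φ μ), Submodule.mem_sup] at htop
  obtain ⟨a, ha, b, hb, rfl⟩ := htop
  have hfiber : ∀ ν, φ ν = φ μ → f.maxGenEigenspace ν ≤ f.maxGenEigenspace μ := by
    intro ν hν
    by_cases hbot : f.maxGenEigenspace ν = ⊥
    · simp [hbot]
    · rw [hφ (hS ν (HasUnifEigenvalue.lt zero_lt_one hbot)) hμ hν]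
  have hfiber_g : ⨆ ν, ⨆ (_ : φ ν = φ μ), f.maxGenEigenspace ν ≤ g.maxGenEigenspace (φ μ) :=
    iSup₂_le fun ν hν => hν ▸ hfg ν
  have hrest : ⨆ ν, ⨆ (_ : φ ν ≠ φ μ), f.maxGenEigenspace ν ≤
      ⨆ ζ, ⨆ (_ : ζ ≠ φ μ), g.maxGenEigenspace ζ :=
    iSup₂_le fun ν hν => (hfg ν).trans (le_iSup₂_of_le (φ ν) hν le_rfl)
  have hb0 : b = 0 :=
    Submodule.disjoint_def.mp (iSupIndep_def.mp (independent_maxGenEigenspace g) (φ μ)) b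
      (by simpa using sub_mem hv (hfiber_g ha)) (hrest hb)
  rw [hb0, add_zero]
  exact (iSup₂_le hfiber : _ ≤ f.maxGenEigenspace μ) ha

end IsAlgClosed

end Module.End

theorem Complex.exp_injOn_im_mem_Ioo :
    Set.InjOn Complex.exp {z : ℂ | -Real.pi < z.im ∧ z.im < Real.pi} := fun a ha b hb h => by
  rw [← Complex.log_exp ha.1 ha.2.le, h, Complex.log_exp hb.1 hb.2.le]

namespace Matrix

open Module.End

variable {ι : Type*} [Fintype ι] [DecidableEq ι]

theorem exp_map_algebraMap (A : Matrix ι ι ℝ) :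
    NormedSpace.exp (A.map (algebraMap ℝ ℂ)) = (NormedSpace.exp A).map (algebraMap ℝ ℂ) := by
  open scoped Norms.Operator in
  exact (NormedSpace.map_exp (algebraMap ℝ ℂ).mapMatrix
    (Continuous.matrix_map continuous_id (continuous_algebraMap ℝ ℂ)) A).symm

theorem exp_mulVec_eq_aeval_trunc_of_pow_mulVec_eq_zero {N : Matrix ι ι ℂ} {d : ℕ}
    {v : ι → ℂ} (hv : N ^ d *ᵥ v = 0) :
    NormedSpace.exp N *ᵥ v = aeval N (PowerSeries.trunc d (PowerSeries.exp ℂ)) *ᵥ v := by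
  have hsum : HasSum (fun k => ((k.factorial : ℂ)⁻¹ • N ^ k) *ᵥ v)
      (NormedSpace.exp N *ᵥ v) :=
    open scoped Norms.Operator in
    (NormedSpace.exp_series_hasSum_exp' (𝕂 := ℂ) N).map (mulVec.addMonoidHomLeft v)
      (continuous_id.matrix_mulVec continuous_const)
  rw [hsum.unique (hasSum_sum_of_ne_finset_zero (s := Finset.range d) fun k hk => ?_),
    aeval_def, PowerSeries.eval₂_trunc_eq_sum_range, sum_mulVec]
  · refine Finset.sum_congr rfl fun k _ => ?_
    simp [PowerSeries.coeff_exp, Algebra.smul_def]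
  · rw [Finset.mem_range, not_lt] at hk
    rw [smul_mulVec, ← Nat.sub_add_cancel hk, pow_add, ← mulVec_mulVec, hv, mulVec_zero,
      smul_zero]

theorem toLin'_exp_apply_of_mem_genEigenspace {M : Matrix ι ι ℂ} {μ : ℂ} {d : ℕ}
    {v : ι → ℂ} (hv : v ∈ genEigenspace (toLin' M) μ d) :
    toLin' (NormedSpace.exp M) v =
      Complex.exp μ • aeval (toLin' M - μ • 1) (PowerSeries.trunc d (PowerSeries.exp ℂ)) v := by
  set N := M - algebraMap ℂ _ μ
  have hN : toLin' M - μ • 1 = toLinAlgEquiv' N := by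
    rw [map_sub, AlgEquiv.commutes, Algebra.algebraMap_eq_smul_one]; rfl
  have hscalar : NormedSpace.exp (algebraMap ℂ (Matrix ι ι ℂ) μ) =
      algebraMap ℂ _ (Complex.exp μ) := by
    rw [Complex.exp_eq_exp_ℂ]
    open scoped Norms.Operator in exact (NormedSpace.algebraMap_exp_comm μ).symm
  have hexp : NormedSpace.exp M = algebraMap ℂ _ (Complex.exp μ) * NormedSpace.exp N := by
    rw [← hscalar, ← Matrix.exp_add_of_commute _ _ (Algebra.commute_algebraMap_left _ _),
      add_sub_cancel]
  rw [mem_genEigenspace_nat, LinearMap.mem_ker, hN, ← map_pow, toLinAlgEquiv'_apply] at hv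
  rw [hN, aeval_algHom_apply, toLinAlgEquiv'_apply, toLin'_apply, hexp, ← mulVec_mulVec,
    exp_mulVec_eq_aeval_trunc_of_pow_mulVec_eq_zero hv, Algebra.algebraMap_eq_smul_one,
    smul_mulVec, one_mulVec]

theorem maxGenEigenspace_toLin'_le_exp (M : Matrix ι ι ℂ) (μ : ℂ) :
    maxGenEigenspace (toLin' M) μ ≤
      maxGenEigenspace (toLin' (NormedSpace.exp M)) (Complex.exp μ) := by
  intro v hv
  obtain ⟨d, hd⟩ := (mem_maxGenEigenspace _ _ _).mp hv
  refine (mem_maxGenEigenspace _ _ _).mpr ⟨d, ?_⟩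
  set r : ℂ[X] := C (Complex.exp μ) * (PowerSeries.trunc d (PowerSeries.exp ℂ) - 1)
  have hu : ∀ x ∈ LinearMap.ker ((toLin' M - μ • 1) ^ d),
      (toLin' (NormedSpace.exp M) - Complex.exp μ • 1) x = aeval (toLin' M - μ • 1) r x := by
    intro x hx
    rw [LinearMap.sub_apply,
      toLin'_exp_apply_of_mem_genEigenspace (mem_genEigenspace_nat.mpr hx)]
    simp [r, smul_sub]
  have hpow := aeval_apply_eq_aeval_comp_of_eqOn_ker_pow hu (X ^ d) v hd
  rw [map_pow, aeval_X, X_pow_comp] at hpow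
  rw [hpow]
  refine aeval_apply_eq_zero_of_X_pow_dvd hd ?_
  exact (PowerSeries.X_pow_dvd_trunc_exp_sub_one_pow d).trans
    (by rw [mul_pow]; exact dvd_mul_left _ _)

/-- On `V_μ(M)` the operator `e^{-μ} exp M - 1` acts as `(trunc d exp - 1)(M - μ)`, and
`ψ ∘ (trunc d exp - 1) ≡ X` modulo `X ^ d` returns `M - μ`. -/
theorem toLin'_apply_eq_add_aeval_of_mem_genEigenspace {M : Matrix ι ι ℂ} {μ : ℂ} {d : ℕ}
    {ψ : ℂ[X]} (hψ : X ^ d ∣ ψ.comp (PowerSeries.trunc d (PowerSeries.exp ℂ) - 1) - X)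
    {v : ι → ℂ} (hv : v ∈ genEigenspace (toLin' M) μ d) :
    toLin' M v = μ • v + aeval ((Complex.exp μ)⁻¹ • toLin' (NormedSpace.exp M) - 1) ψ v := by
  rw [mem_genEigenspace_nat] at hv
  have hu : ∀ x ∈ LinearMap.ker ((toLin' M - μ • 1) ^ d),
      ((Complex.exp μ)⁻¹ • toLin' (NormedSpace.exp M) - 1) x =
        aeval (toLin' M - μ • 1) (PowerSeries.trunc d (PowerSeries.exp ℂ) - 1) x := by
    intro x hx
    rw [LinearMap.sub_apply, LinearMap.smul_apply,
      toLin'_exp_apply_of_mem_genEigenspace (mem_genEigenspace_nat.mpr hx),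
      inv_smul_smul₀ (Complex.exp_ne_zero μ)]
    simp
  rw [aeval_apply_eq_aeval_comp_of_eqOn_ker_pow hu ψ v hv, ← add_sub_cancel X (ψ.comp _),
    map_add, LinearMap.add_apply, aeval_apply_eq_zero_of_X_pow_dvd hv hψ, add_zero, aeval_X]
  simp

theorem exists_log_poly :
    ∃ ψ : ℂ[X], ∀ (M : Matrix ι ι ℂ) (μ : ℂ), ∀ v ∈ maxGenEigenspace (toLin' M) μ,
      toLin' M v = μ • v + aeval ((Complex.exp μ)⁻¹ • toLin' (NormedSpace.exp M) - 1) ψ v := by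
  set d := Module.finrank ℂ (ι → ℂ) + 2
  obtain ⟨ψ, hψ⟩ := exists_X_pow_dvd_comp_sub_X
    (PowerSeries.X_sq_dvd_trunc_exp_sub_one_sub_X (A := ℂ) (d := d) le_add_self) d
  refine ⟨ψ, fun M μ v hv => toLin'_apply_eq_add_aeval_of_mem_genEigenspace hψ ?_⟩
  rw [maxGenEigenspace_eq_genEigenspace_finrank] at hv
  exact (genEigenspace _ _).monotone (by simp [d]) hv

theorem exp_injOn_of_exp_injOn {S : Set ℂ} (hS : S.InjOn Complex.exp) :
    Set.InjOn NormedSpace.exp {A : Matrix ι ι ℂ | ∀ μ, A.charpoly.IsRoot μ → μ ∈ S} := by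
  intro A₁ h₁ A₂ h₂ hexp
  have hev : ∀ A : Matrix ι ι ℂ, (∀ μ, A.charpoly.IsRoot μ → μ ∈ S) →
      ∀ μ, HasEigenvalue (toLin' A) μ → μ ∈ S := fun A hA μ hμ =>
    hA μ (by rwa [hasEigenvalue_iff_isRoot_charpoly, charpoly_toLin'] at hμ)
  obtain ⟨ψ, hψ⟩ := exists_log_poly (ι := ι)
  have heqOn : ∀ μ, maxGenEigenspace (toLin' A₂) μ ≤
      LinearMap.eqLocus (toLin' A₁) (toLin' A₂) := by
    intro μ v hv
    by_cases hμ : μ ∈ S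
    · have hv₁ : v ∈ maxGenEigenspace (toLin' A₁) μ :=
        maxGenEigenspace_le_of_injOn (hev A₁ h₁) hS (maxGenEigenspace_toLin'_le_exp A₁) hμ
          (hexp ▸ maxGenEigenspace_toLin'_le_exp A₂ μ hv)
      rw [LinearMap.mem_eqLocus, hψ A₁ μ v hv₁, hψ A₂ μ v hv, hexp]
    · have hbot : maxGenEigenspace (toLin' A₂) μ = ⊥ := by
        by_contra h
        exact hμ (hev A₂ h₂ μ (HasUnifEigenvalue.lt zero_lt_one h))
      rw [hbot, Submodule.mem_bot] at hv
      simp [hv]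
  have htop := iSup_le heqOn
  rw [iSup_maxGenEigenspace_eq_top] at htop
  exact toLin'.injective (LinearMap.ext fun v => htop trivial)

end Matrix

/-- **Injectivity of `exp` on `S(n)`.** The matrix exponential is injective on the set
of real `n × n` matrices all of whose eigenvalues `λ + iμ` satisfy `−π < μ < π`. -/
theorem exp_injOn_strip (n : ℕ) :
    Set.InjOn NormedSpace.exp
      {X : Matrix (Fin n) (Fin n) ℝ |
        ∀ z : ℂ, eigR X z → -Real.pi < z.im ∧ z.im < Real.pi} := by
  intro X₁ h₁ X₂ h₂ hexp
  have hcomplexify : ∀ X : Matrix (Fin n) (Fin n) ℝ,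
      (∀ z, eigR X z → -Real.pi < z.im ∧ z.im < Real.pi) →
      ∀ μ, (X.map (algebraMap ℝ ℂ)).charpoly.IsRoot μ → -Real.pi < μ.im ∧ μ.im < Real.pi :=
    fun X hX μ hμ => hX μ (by rwa [charpoly_map] at hμ)
  refine Matrix.map_injective (algebraMap ℝ ℂ).injective
    (Matrix.exp_injOn_of_exp_injOn Complex.exp_injOn_im_mem_Ioo (hcomplexify X₁ h₁)
      (hcomplexify X₂ h₂) ?_)
  rw [Matrix.exp_map_algebraMap, Matrix.exp_map_algebraMap, hexp]
end

section
/- Let A be an invertible complex n×n matrix with A = P J P⁻¹, where P is invertible and J is the Jordan matrix with diagonal blocks J_{r_1}(λ_1), …, J_{r_m}(λ_m). Then there exists an invertible complex n×n matrix Q such that A² = Q J' Q⁻¹, where J' is the Jordan matrix with diagonal blocks J_{r_1}(λ_1²), …, J_{r_m}(λ_m²). Equivalently, if the elementary divisors of A are (X − λ_1)^{r_1}, …, (X − λ_m)^{r_m}, then the elementary divisors of A² are (X − λ_1²)^{r_1}, …, (X − λ_m²)^{r_m}. -/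
open Matrix

namespace SqJordanAux

/-- `M` vanishes strictly below the `k`-th superdiagonal. -/
def UppK {r : ℕ} (M : Matrix (Fin r) (Fin r) ℂ) (k : ℕ) : Prop :=
  ∀ i j : Fin r, (j : ℕ) < (i : ℕ) + k → M i j = 0

variable {r : ℕ}

lemma UppK.mono {M : Matrix (Fin r) (Fin r) ℂ} {k l : ℕ} (h : UppK M k) (hl : l ≤ k) :
    UppK M l :=
  fun i j hj => h i j (by omega)

lemma UppK.add {M N : Matrix (Fin r) (Fin r) ℂ} {k : ℕ} (hM : UppK M k) (hN : UppK N k) :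
    UppK (M + N) k := fun i j hj => by
  simp [Matrix.add_apply, hM i j hj, hN i j hj]

lemma UppK.smul {M : Matrix (Fin r) (Fin r) ℂ} {k : ℕ} (c : ℂ) (hM : UppK M k) :
    UppK (c • M) k := fun i j hj => by
  simp [hM i j hj]

lemma UppK.mul {M N : Matrix (Fin r) (Fin r) ℂ} {k l : ℕ} (hM : UppK M k) (hN : UppK N l) :
    UppK (M * N) (k + l) := by
  intro i j hj
  rw [Matrix.mul_apply]
  apply Finset.sum_eq_zero
  intro t _
  by_cases ht : (t : ℕ) < (i : ℕ) + k
  · rw [hM i t ht, zero_mul]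
  · rw [hN t j (by omega), mul_zero]

lemma UppK.pow {M : Matrix (Fin r) (Fin r) ℂ} (hM : UppK M 1) : ∀ k, UppK (M ^ k) k
  | 0 => fun i j hj => by
      have hij : i ≠ j := fun h => by subst h; omega
      simp [Matrix.one_apply_ne hij]
  | (k + 1) => by
      rw [pow_succ]
      exact (UppK.pow hM k).mul hM

lemma pow_superdiag {M : Matrix (Fin r) (Fin r) ℂ} {c : ℂ} (h1 : UppK M 1)
    (hs : ∀ i j : Fin r, (j : ℕ) = (i : ℕ) + 1 → M i j = c) :
    ∀ (k : ℕ) (i j : Fin r), (j : ℕ) = (i : ℕ) + k → (M ^ k) i j = c ^ k := by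
  intro k
  induction k with
  | zero =>
      intro i j hj
      have : i = j := Fin.ext (by omega)
      subst this
      simp [Matrix.one_apply]
  | succ k ih =>
      intro i j hj
      have hi1 : (i : ℕ) + 1 < r := by omega
      set t₀ : Fin r := ⟨(i : ℕ) + 1, hi1⟩ with ht₀
      have htv : (t₀ : ℕ) = (i : ℕ) + 1 := rfl
      rw [pow_succ', Matrix.mul_apply]
      rw [Finset.sum_eq_single t₀]
      · have h1' : M i t₀ = c := hs i t₀ rfl
        have h2' : (M ^ k) t₀ j = c ^ k := ih t₀ j (by omega)
        rw [h1', h2', ← pow_succ']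
      · intro t _ htne
        have hvne : (t : ℕ) ≠ (i : ℕ) + 1 := fun h => htne (Fin.ext h)
        by_cases hlt : (t : ℕ) < (i : ℕ) + 1
        · rw [h1 i t hlt, zero_mul]
        · rw [(h1.pow k) t j (by omega), mul_zero]
      · intro h
        exact absurd (Finset.mem_univ t₀) h

lemma jordanBlock_eq (μ : ℂ) :
    jordanBlock r μ = μ • (1 : Matrix (Fin r) (Fin r) ℂ) + jordanBlock r (0 : ℂ) := by
  ext i j
  simp only [jordanBlock, Matrix.add_apply, Matrix.smul_apply, Matrix.one_apply, smul_eq_mul]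
  by_cases h1 : (j : ℕ) = (i : ℕ)
  · have : i = j := Fin.ext h1.symm
    simp [this, h1]
  · have : ¬ i = j := fun h => h1 (by rw [h])
    simp [h1, this]

end SqJordanAux

open SqJordanAux in
/-- For `μ ≠ 0` (or trivially for `r = 0`), `J_r(μ)^2` is similar to `J_r(μ^2)`. -/
lemma jordan_sq_sim (r : ℕ) (μ : ℂ) (hμ : μ ≠ 0 ∨ r = 0) :
    ∃ S : Matrix (Fin r) (Fin r) ℂ, IsUnit S ∧
      (jordanBlock r μ) ^ 2 * S = S * jordanBlock r (μ ^ 2) := by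
  rcases Nat.eq_zero_or_pos r with hr | hr
  · subst hr
    refine ⟨1, isUnit_one, ?_⟩
    ext i j
    exact i.elim0
  have hμ0 : μ ≠ 0 := by
    rcases hμ with h | h
    · exact h
    · omega
  set N₀ : Matrix (Fin r) (Fin r) ℂ := jordanBlock r (0 : ℂ) with hN₀def
  have hN₀u : UppK N₀ 1 := by
    intro i j hj
    simp only [hN₀def, jordanBlock]
    split_ifs with h h
    · rfl
    · omega
    · rfl
  set N : Matrix (Fin r) (Fin r) ℂ := (2 * μ) • N₀ + N₀ * N₀ with hNdef
  have hNu : UppK N 1 :=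
    (hN₀u.smul (2 * μ)).add ((hN₀u.mul hN₀u).mono (by omega))
  have hNs : ∀ i j : Fin r, (j : ℕ) = (i : ℕ) + 1 → N i j = 2 * μ := by
    intro i j hj
    have h2 : (N₀ * N₀) i j = 0 := (hN₀u.mul hN₀u) i j (by omega)
    have h0 : N₀ i j = 1 := by
      simp only [hN₀def, jordanBlock]
      rw [if_neg (by omega), if_pos hj]
    simp [hNdef, Matrix.add_apply, h2, h0]
  have hJ2 : (jordanBlock r μ) ^ 2 = (μ ^ 2) • (1 : Matrix (Fin r) (Fin r) ℂ) + N := by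
    rw [jordanBlock_eq μ, sq, hNdef]
    simp only [add_mul, mul_add, smul_mul_assoc, Matrix.mul_smul, one_mul, mul_one]
    module
  have hrlast : r - 1 < r := by omega
  set last : Fin r := ⟨r - 1, hrlast⟩ with hlast
  have hlv : (last : ℕ) = r - 1 := rfl
  set S : Matrix (Fin r) (Fin r) ℂ :=
    Matrix.of (fun i j : Fin r => (N ^ (r - 1 - (j : ℕ))) i last) with hSdef
  have hSapp : ∀ i j : Fin r, S i j = (N ^ (r - 1 - (j : ℕ))) i last := fun i j => rfl
  -- S is a unit
  have hSdiag : ∀ j : Fin r, S j j = (2 * μ) ^ (r - 1 - (j : ℕ)) := by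
    intro j
    rw [hSapp]
    exact pow_superdiag hNu hNs _ j last (by have := j.2; omega)
  have hStri : S.BlockTriangular id := by
    intro i j hij
    have hij' : (j : ℕ) < (i : ℕ) := hij
    rw [hSapp]
    exact (hNu.pow _) i last (by have := j.2; omega)
  have hSunit : IsUnit S := by
    rw [Matrix.isUnit_iff_isUnit_det, Matrix.det_of_upperTriangular hStri]
    rw [isUnit_iff_ne_zero]
    apply Finset.prod_ne_zero_iff.mpr
    intro j _
    rw [hSdiag]
    exact pow_ne_zero _ (by simpa using hμ0)
  refine ⟨S, hSunit, ?_⟩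
  -- key commutation : N * S = S * N₀
  have hcomm : N * S = S * N₀ := by
    ext i j
    have hLHS : (N * S) i j = (N ^ (r - 1 - (j : ℕ) + 1)) i last := by
      rw [pow_succ']
      simp only [Matrix.mul_apply, hSapp]
    rcases Nat.eq_zero_or_pos (j : ℕ) with hj0 | hjpos
    · have hRHS : (S * N₀) i j = 0 := by
        rw [Matrix.mul_apply]
        apply Finset.sum_eq_zero
        intro t _
        have : N₀ t j = 0 := by
          simp only [hN₀def, jordanBlock]
          split_ifs with h h
          · rfl
          · omega
          · rfl
        rw [this, mul_zero]
      rw [hLHS, hRHS]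
      have : r - 1 - (j : ℕ) + 1 = r := by omega
      rw [this]
      exact (hNu.pow r) i last (by omega)
    · have hc : (j : ℕ) - 1 < r := by omega
      set t₀ : Fin r := ⟨(j : ℕ) - 1, hc⟩ with ht₀
      have htv : (t₀ : ℕ) = (j : ℕ) - 1 := rfl
      have hRHS : (S * N₀) i j = S i t₀ := by
        rw [Matrix.mul_apply, Finset.sum_eq_single t₀]
        · have : N₀ t₀ j = 1 := by
            simp only [hN₀def, jordanBlock]
            rw [if_neg (by omega), if_pos (by omega)]
          rw [this, mul_one]
        · intro t _ htne
          have hvne : (t : ℕ) ≠ (j : ℕ) - 1 := fun h => htne (Fin.ext h)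
          have : N₀ t j = 0 := by
            simp only [hN₀def, jordanBlock]
            split_ifs with h h
            · rfl
            · omega
            · rfl
          rw [this, mul_zero]
        · intro h
          exact absurd (Finset.mem_univ t₀) h
      rw [hLHS, hRHS, hSapp]
      have hje : r - 1 - ((t₀ : ℕ)) = r - 1 - (j : ℕ) + 1 := by
        have := j.2
        omega
      rw [hje]
  rw [hJ2, jordanBlock_eq (μ ^ 2)]
  rw [add_mul, mul_add, hcomm, smul_mul_assoc, Matrix.mul_smul, one_mul, mul_one]

/-- If the block diagonal of Jordan blocks is invertible, each eigenvalue of a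
nonempty block is nonzero. -/
lemma lam_ne_zero {m : ℕ} {r : Fin m → ℕ} {lam : Fin m → ℂ}
    (hJ : IsUnit (Matrix.blockDiagonal' (fun k => jordanBlock (r k) (lam k)))) (k : Fin m) :
    lam k ≠ 0 ∨ r k = 0 := by
  by_cases hrk : r k = 0
  · exact Or.inr hrk
  left
  intro hlam
  set J := Matrix.blockDiagonal' (fun k => jordanBlock (r k) (lam k)) with hJdef
  obtain ⟨u, hu⟩ := hJ
  have hinv : (↑u⁻¹ : Matrix _ _ ℂ) * J = 1 := by rw [← hu]; exact u.inv_mul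
  have hpos : 0 < r k := Nat.pos_of_ne_zero hrk
  set x : (Σ k, Fin (r k)) := ⟨k, ⟨0, hpos⟩⟩ with hx
  have hcol : ∀ y, J y x = 0 := by
    rintro ⟨l, t⟩
    rcases eq_or_ne l k with h | h
    · subst h
      rw [hJdef, hx, Matrix.blockDiagonal'_apply_eq]
      simp only [jordanBlock]
      split_ifs with h1 h2
      · exact hlam
      · simp at h2
      · rfl
    · rw [hJdef]; exact Matrix.blockDiagonal'_apply_ne _ _ _ h
  have hxx := congrFun (congrFun hinv x) x
  rw [Matrix.mul_apply] at hxx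
  simp only [hcol, mul_zero, Finset.sum_const_zero, Matrix.one_apply_eq] at hxx
  exact zero_ne_one hxx

/-- **The Jordan structure is preserved by squaring an invertible matrix.**
If `A` is invertible and `A = P J P⁻¹` where `J` is the Jordan matrix with blocks
`J_{r_1}(λ_1), …, J_{r_m}(λ_m)`, then there is an invertible `Q` with `A² = Q J' Q⁻¹`,
where `J'` is the Jordan matrix with blocks `J_{r_1}(λ_1²), …, J_{r_m}(λ_m²)`. -/
theorem sq_jordan_form (n : ℕ) (A : Matrix (Fin n) (Fin n) ℂ) (hA : IsUnit A)
    (m : ℕ) (r : Fin m → ℕ) (lam : Fin m → ℂ)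
    (e : (Σ k : Fin m, Fin (r k)) ≃ Fin n)
    (P : Matrix (Fin n) (Fin n) ℂ) (hP : IsUnit P)
    (hAJ : A = P * (Matrix.reindex e e
        (Matrix.blockDiagonal' (fun k => jordanBlock (r k) (lam k)))) * P⁻¹) :
    ∃ Q : Matrix (Fin n) (Fin n) ℂ, IsUnit Q ∧
      A ^ 2 = Q * (Matrix.reindex e e
        (Matrix.blockDiagonal' (fun k => jordanBlock (r k) ((lam k) ^ 2)))) * Q⁻¹ := by
  classical
  set BD := Matrix.blockDiagonal' (fun k => jordanBlock (r k) (lam k)) with hBDdef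
  set RJ := Matrix.reindex e e BD with hRJdef
  have hPdet : IsUnit P.det := (Matrix.isUnit_iff_isUnit_det P).mp hP
  have hPP : P * P⁻¹ = 1 := Matrix.mul_nonsing_inv P hPdet
  have hPP' : P⁻¹ * P = 1 := Matrix.nonsing_inv_mul P hPdet
  -- multiplicativity of reindexing
  have hmul : ∀ M N : Matrix (Σ k, Fin (r k)) (Σ k, Fin (r k)) ℂ,
      Matrix.reindex e e M * Matrix.reindex e e N = Matrix.reindex e e (M * N) := by
    intro M N
    simp only [Matrix.reindex_apply, Matrix.submatrix_mul_equiv]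
  -- RJ is a unit
  have hconj : P⁻¹ * A * P = RJ := by
    rw [hAJ]
    calc P⁻¹ * (P * RJ * P⁻¹) * P = P⁻¹ * P * (RJ * (P⁻¹ * P)) := by
          simp only [Matrix.mul_assoc]
      _ = RJ := by rw [hPP', Matrix.mul_one, Matrix.one_mul]
  have hRJu : IsUnit RJ := by
    rw [← hconj, Matrix.isUnit_iff_isUnit_det, Matrix.det_mul, Matrix.det_mul]
    exact ((Matrix.isUnit_nonsing_inv_det P hPdet).mul
      ((Matrix.isUnit_iff_isUnit_det A).mp hA)).mul hPdet
  have hBDu : IsUnit BD := by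
    rw [Matrix.isUnit_iff_isUnit_det] at hRJu ⊢
    rwa [hRJdef, Matrix.det_reindex_self] at hRJu
  -- per-block similarity
  choose S hSu hSc using fun k => jordan_sq_sim (r k) (lam k) (lam_ne_zero hBDu k)
  set T := Matrix.reindex e e (Matrix.blockDiagonal' S) with hTdef
  have hBDSu : IsUnit (Matrix.blockDiagonal' S) := by
    refine ⟨⟨Matrix.blockDiagonal' S, Matrix.blockDiagonal' (fun k => (S k)⁻¹), ?_, ?_⟩, rfl⟩
    · rw [← Matrix.blockDiagonal'_mul]
      have : (fun k => S k * (S k)⁻¹) = fun _ => 1 :=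
        funext fun k => Matrix.mul_nonsing_inv _ ((Matrix.isUnit_iff_isUnit_det _).mp (hSu k))
      rw [this]; exact Matrix.blockDiagonal'_one
    · rw [← Matrix.blockDiagonal'_mul]
      have : (fun k => (S k)⁻¹ * S k) = fun _ => 1 :=
        funext fun k => Matrix.nonsing_inv_mul _ ((Matrix.isUnit_iff_isUnit_det _).mp (hSu k))
      rw [this]; exact Matrix.blockDiagonal'_one
  have hTu : IsUnit T := by
    rw [Matrix.isUnit_iff_isUnit_det, hTdef, Matrix.det_reindex_self,
      ← Matrix.isUnit_iff_isUnit_det]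
    exact hBDSu
  have hTdet : IsUnit T.det := (Matrix.isUnit_iff_isUnit_det T).mp hTu
  have hTT : T * T⁻¹ = 1 := Matrix.mul_nonsing_inv T hTdet
  set RJ' := Matrix.reindex e e
    (Matrix.blockDiagonal' (fun k => jordanBlock (r k) ((lam k) ^ 2))) with hRJ'def
  -- block computation
  have hblock : BD * BD * Matrix.blockDiagonal' S
      = Matrix.blockDiagonal' S * Matrix.blockDiagonal' (fun k => jordanBlock (r k) ((lam k) ^ 2)) := by
    rw [hBDdef, ← Matrix.blockDiagonal'_mul, ← Matrix.blockDiagonal'_mul,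
      ← Matrix.blockDiagonal'_mul]
    exact congrArg Matrix.blockDiagonal'
      (funext fun k => by rw [← sq]; exact hSc k)
  have h2 : RJ * RJ * T = T * RJ' := by
    calc RJ * RJ * T = Matrix.reindex e e (BD * BD * Matrix.blockDiagonal' S) := by
          rw [hRJdef, hTdef, hmul, hmul]
      _ = Matrix.reindex e e (Matrix.blockDiagonal' S *
            Matrix.blockDiagonal' (fun k => jordanBlock (r k) ((lam k) ^ 2))) := by rw [hblock]
      _ = T * RJ' := by rw [hTdef, hRJ'def, hmul]
  have hRJsq : RJ * RJ = T * RJ' * T⁻¹ := by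
    calc RJ * RJ = RJ * RJ * T * T⁻¹ := by rw [Matrix.mul_assoc, hTT, Matrix.mul_one]
      _ = T * RJ' * T⁻¹ := by rw [h2]
  have hQu : IsUnit (P * T) := by
    rw [Matrix.isUnit_iff_isUnit_det, Matrix.det_mul]
    exact hPdet.mul hTdet
  refine ⟨P * T, hQu, ?_⟩
  have hQinv : (P * T)⁻¹ = T⁻¹ * P⁻¹ := Matrix.mul_inv_rev P T
  rw [hQinv]
  calc A ^ 2 = (P * RJ * P⁻¹) * (P * RJ * P⁻¹) := by rw [sq, ← hAJ]
    _ = P * (RJ * ((P⁻¹ * P) * (RJ * P⁻¹))) := by simp only [Matrix.mul_assoc]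
    _ = P * (RJ * RJ) * P⁻¹ := by rw [hPP', Matrix.one_mul]; simp only [Matrix.mul_assoc]
    _ = P * (T * RJ' * T⁻¹) * P⁻¹ := by rw [hRJsq]
    _ = P * T * RJ' * (T⁻¹ * P⁻¹) := by simp only [Matrix.mul_assoc]
end

section
/- Every invertible complex n×n matrix A has a square root: there exists a complex n×n matrix X such that X² = A. -/
/-!
Interpolating an `n`-th root of each eigenvalue (root of the minimal polynomial) gives a
polynomial `p` with `p(A) ^ n - A` nilpotent. Then `p(A)` is invertible along with `A`, so
Newton's method for `X ^ n - A`, run in the commutative ring generated by `A`, `p(A)` and the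
relevant inverses, terminates at an exact `n`-th root of `A`.
-/

open Polynomial

theorem exists_pow_eq_of_isNilpotent_pow_sub {S : Type*} [CommRing S] {n : ℕ} {a x : S}
    (hn : n ≠ 0) (hn' : IsUnit (n : S)) (ha : IsUnit a) (hx : IsNilpotent (x ^ n - a)) :
    ∃ y, y ^ n = a := by
  have hxn : IsUnit (x ^ n) := by
    simpa using hx.isUnit_add_left_of_commute ha (Commute.all _ _)
  have hx' : IsUnit x := (isUnit_pow_iff hn).mp hxn
  obtain ⟨y, ⟨-, hy⟩, -⟩ := existsUnique_nilpotent_sub_and_aeval_eq_zero (P := X ^ n - C a)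
    (x := x) (by simpa using hx) (by simpa [derivative_X_pow] using hn'.mul (hx'.pow (n - 1)))
  exact ⟨y, by simpa [sub_eq_zero] using hy⟩

open scoped IsMulCommutative in
theorem exists_pow_eq_of_commute_of_isNilpotent_pow_sub {M : Type*} [Ring M] {n : ℕ} {a x : M}
    (hn : n ≠ 0) (hn' : IsUnit (n : M)) (ha : IsUnit a) (hxa : Commute x a)
    (hx : IsNilpotent (x ^ n - a)) : ∃ y, y ^ n = a := by
  set s : Set M := {a, ↑ha.unit⁻¹, x, ↑hn'.unit⁻¹}
  have hs : ∀ y ∈ s, Commute y a ∧ Commute y x := by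
    rintro _ (rfl | rfl | rfl | rfl)
    · exact ⟨.refl _, hxa.symm⟩
    · exact ⟨(Commute.refl a).units_inv_left, hxa.symm.units_inv_left⟩
    · exact ⟨hxa, .refl _⟩
    · exact ⟨(Nat.cast_commute n a).units_inv_left, (Nat.cast_commute n x).units_inv_left⟩
  have : IsMulCommutative (Subring.closure s) := Subring.isMulCommutative_closure <| by
    intro y hy z hz
    obtain ⟨hya, hyx⟩ := hs y hy
    rcases hz with rfl | rfl | rfl | rfl
    · exact hya
    · exact hya.units_inv_right
    · exact hyx
    · exact (Nat.commute_cast y n).units_inv_right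
  have hmem : s ⊆ Subring.closure s := Subring.subset_closure
  let aS : Subring.closure s := ⟨a, hmem (by simp [s])⟩
  let xS : Subring.closure s := ⟨x, hmem (by simp [s])⟩
  have haS : IsUnit aS := .of_mul_eq_one ⟨_, hmem (by simp [s])⟩ (Subtype.ext ha.mul_val_inv)
  have hnS : IsUnit (n : Subring.closure s) :=
    .of_mul_eq_one ⟨_, hmem (by simp [s])⟩ (Subtype.ext hn'.mul_val_inv)
  have hxS : IsNilpotent (xS ^ n - aS) :=
    (IsNilpotent.map_iff (f := (Subring.closure s).subtype) Subtype.val_injective).mp hx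
  obtain ⟨y, hy⟩ := exists_pow_eq_of_isNilpotent_pow_sub hn hnS haS hxS
  exact ⟨y, congrArg Subtype.val hy⟩

theorem exists_isNilpotent_aeval_pow_sub {K M : Type*} [Field K] [IsAlgClosed K] [Ring M]
    [Algebra K M] {n : ℕ} (hn : n ≠ 0) {a : M} (ha : IsIntegral K a) :
    ∃ p : K[X], IsNilpotent (aeval a p ^ n - a) := by
  classical
  choose r hr using fun z : K => IsAlgClosed.exists_pow_nat_eq z (Nat.pos_of_ne_zero hn)
  set f := minpoly K a
  set p := Lagrange.interpolate f.roots.toFinset id r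
  have hroot : ∀ z ∈ f.roots, X - C z ∣ p ^ n - X := fun z hz => by
    have hpz : p.eval z = r z :=
      Lagrange.eval_interpolate_at_node (v := id) r (Set.injOn_id _) (Multiset.mem_toFinset.mpr hz)
    rw [dvd_iff_isRoot, IsRoot, eval_sub, eval_pow, eval_X, hpz, hr, sub_self]
  have hdvd : f ∣ (p ^ n - X) ^ f.roots.card := by
    rw [← C_leadingCoeff_mul_prod_multiset_X_sub_C (p := f) IsAlgClosed.card_roots_eq_natDegree,
      (minpoly.monic ha).leadingCoeff, C_1, one_mul]
    simpa using Multiset.prod_dvd_prod_of_dvd _ (fun _ => p ^ n - X) hroot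
  exact ⟨p, f.roots.card,
    by simpa using aeval_eq_zero_of_dvd_aeval_eq_zero hdvd (minpoly.aeval K a)⟩

/-- Every invertible complex `n × n` matrix has a square root. -/
theorem exists_sqrt_of_isUnit_complex (n : ℕ) (A : Matrix (Fin n) (Fin n) ℂ)
    (hA : IsUnit A) :
    ∃ X : Matrix (Fin n) (Fin n) ℂ, X ^ 2 = A := by
  obtain ⟨p, hp⟩ :=
    exists_isNilpotent_aeval_pow_sub two_ne_zero (Algebra.IsIntegral.isIntegral (R := ℂ) A)
  have h2 := (IsUnit.mk0 (2 : ℂ) two_ne_zero).map (algebraMap ℂ (Matrix (Fin n) (Fin n) ℂ))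
  rw [map_ofNat] at h2
  exact exists_pow_eq_of_commute_of_isNilpotent_pow_sub two_ne_zero (by exact_mod_cast h2) hA
    (by simpa using (Commute.all p X).map (aeval A)) hp
end

section
/- Let A be a real invertible n×n matrix. Then A has a real square root (a real n×n matrix X with X² = A) if and only if, for every integer r ≥ 1 and every real eigenvalue λ < 0 of A, the number of Jordan blocks J_r(λ) in the Jordan form of A — which equals rank((A − λI)^{r−1}) − 2·rank((A − λI)^r) + rank((A − λI)^{r+1}) — is even. -/
/-!
View `ℝⁿ` as an `ℝ[X]`-module with `X` acting as `A`; by the structure theorem over the PID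
`ℝ[X]` it is a direct sum of cyclic modules `ℝ[X] ⧸ (π ^ e)` with `π` irreducible, and the
summands with `π ~ X - λ` are the Jordan blocks `J_e(λ)`. A square root of `A` is a square root
of `X` in the endomorphism ring of this module.

If `Y ^ 2 = A` and `λ < 0`, then `Y` preserves `W = ker ((A - λ) ^ k)`, where `Y ^ 2 - λ` is
nilpotent, so `det (Y|_W) ^ 2 = det (Y ^ 2|_W) = λ ^ dim W`; hence `dim W` is even, and so is
every alternating combination of these nullities, in particular the number of Jordan blocks.

Conversely, on a summand `ℝ[X] ⧸ (π ^ e)` which is not a block `J_e(λ)` with `λ ≤ 0`, the class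
of `X` is already a square in the ring: it is a nonzero square in the residue field `ℝ[X] ⧸ (π)`
(which is `ℝ` with `X = λ > 0`, or `ℂ`), and Newton's iteration lifts square roots of units
along the nilpotent ideal `(π)`. Blocks with `λ = 0` do not occur since `A` is invertible, and
blocks `J_r(λ)` with `λ < 0` come in pairs, on which `(u, v) ↦ (X v, u)` squares to `X`.
-/

open Polynomial Module Finset

theorem isSquare_of_isNilpotent_mul_self_sub {S : Type*} [CommRing S]
    (h2 : IsUnit (2 : S)) {v x : S} (hv : IsUnit v) (h : IsNilpotent (v * v - x)) :
    IsSquare x := by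
  have hderiv : aeval v (derivative (X ^ 2 - C x)) = 2 * v := by simp [one_add_one_eq_two]
  obtain ⟨w, -, hw⟩ := (existsUnique_nilpotent_sub_and_aeval_eq_zero (x := v)
    (P := X ^ 2 - C x) (by simpa [sq] using h) (hderiv ▸ h2.mul hv)).exists
  exact ⟨w, by simpa [sub_eq_zero, sq, eq_comm] using hw⟩

theorem Ideal.Quotient.isUnit_mk_of_isCoprime {R : Type*} [CommRing R] {a b : R}
    (h : IsCoprime a b) : IsUnit (Ideal.Quotient.mk (Ideal.span {b}) a) := by
  obtain ⟨u, v, huv⟩ := h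
  refine IsUnit.of_mul_eq_one (Ideal.Quotient.mk _ u) ?_
  rw [← map_mul, ← sub_eq_zero, ← map_one (Ideal.Quotient.mk _), ← map_sub,
    Ideal.Quotient.eq_zero_iff_mem, Ideal.mem_span_singleton]
  exact ⟨-v, by linear_combination huv⟩

theorem Polynomial.isSquare_mk_X_of_isSquare_root {K : Type*} [Field K] (h2 : (2 : K) ≠ 0)
    {π : K[X]} (hπ : Irreducible π) (hroot : AdjoinRoot.root π ≠ 0)
    (hsq : IsSquare (AdjoinRoot.root π)) (e : ℕ) :
    IsSquare (Ideal.Quotient.mk (Ideal.span {π ^ e}) X) := by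
  obtain ⟨ν, hν⟩ := hsq
  obtain ⟨q, rfl⟩ := AdjoinRoot.mk_surjective ν
  have hq : IsCoprime q (π ^ e) := by
    refine IsCoprime.pow_right (IsCoprime.symm ((hπ.coprime_iff_not_dvd).2 fun hdvd => ?_))
    exact hroot (by rw [hν, AdjoinRoot.mk_eq_zero.2 hdvd, zero_mul])
  have hdvd : π ∣ q * q - X := by
    rw [← AdjoinRoot.mk_eq_zero, map_sub, map_mul, AdjoinRoot.mk_X, hν, sub_self]
  refine isSquare_of_isNilpotent_mul_self_sub ?_
    (Ideal.Quotient.isUnit_mk_of_isCoprime hq) ⟨e, ?_⟩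
  · simpa only [map_ofNat] using
      (isUnit_iff_ne_zero.2 h2).map (algebraMap K (K[X] ⧸ Ideal.span {π ^ e}))
  · rw [← map_mul, ← map_sub, ← map_pow, Ideal.Quotient.eq_zero_iff_mem,
      Ideal.mem_span_singleton]
    exact pow_dvd_pow_of_dvd hdvd e

theorem Real.isSquare_of_two_le_finrank {K : Type*} [Field K] [Algebra ℝ K]
    [FiniteDimensional ℝ K] (hK : 2 ≤ finrank ℝ K) (z : K) : IsSquare z := by
  let φ : K →ₐ[ℝ] ℂ := IsAlgClosed.lift
  have hφ : Function.Injective φ := φ.toRingHom.injective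
  have hrank : finrank ℝ K = finrank ℝ ℂ := by
    have := LinearMap.finrank_le_finrank_of_injective (f := φ.toLinearMap) hφ
    rw [Complex.finrank_real_complex] at this ⊢
    omega
  let ψ : K ≃ₐ[ℝ] ℂ := AlgEquiv.ofBijective φ ⟨hφ,
    (LinearMap.injective_iff_surjective_of_finrank_eq_finrank (f := φ.toLinearMap) hrank).1 hφ⟩
  have hsq : IsSquare (ψ z) := IsAlgClosed.exists_eq_mul_self (ψ z)
  simpa using hsq.map ψ.symm

theorem AdjoinRoot.isSquare_root_of_forall_neg_not_isRoot {π : ℝ[X]} (hπ : Irreducible π)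
    (h : ∀ μ < 0, ¬ π.IsRoot μ) : IsSquare (AdjoinRoot.root π) := by
  by_cases hroot : ∃ μ, π.IsRoot μ
  · obtain ⟨μ, hμ⟩ := hroot
    have hdvd : π ∣ X - C μ := (irreducible_X_sub_C μ).dvd_symm hπ (dvd_iff_isRoot.2 hμ)
    have hroot_eq : AdjoinRoot.root π = AdjoinRoot.of π μ := by
      rw [← sub_eq_zero, ← AdjoinRoot.mk_X, ← AdjoinRoot.mk_C, ← map_sub,
        AdjoinRoot.mk_eq_zero]
      exact hdvd
    refine ⟨AdjoinRoot.of π √μ, ?_⟩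
    rw [hroot_eq, ← map_mul, Real.mul_self_sqrt (not_lt.1 fun hneg => h μ hneg hμ)]
  · have := Fact.mk hπ
    have : FiniteDimensional ℝ (AdjoinRoot π) := (AdjoinRoot.powerBasis hπ.ne_zero).finite
    refine Real.isSquare_of_two_le_finrank ?_ _
    rw [(AdjoinRoot.powerBasis hπ.ne_zero).finrank, AdjoinRoot.powerBasis_dim]
    have h1 : π.natDegree ≠ 1 := fun h1 =>
      hroot (exists_root_of_degree_eq_one (degree_eq_iff_natDegree_eq_of_pos one_pos |>.2 h1))
    have := hπ.natDegree_pos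
    omega

theorem Polynomial.isSquare_mk_X_of_forall_nonpos_associated {π : ℝ[X]} (hπ : Irreducible π)
    {e : ℕ} (h : ∀ μ ≤ 0, Associated π (X - C μ) → e = 0) :
    IsSquare (Ideal.Quotient.mk (Ideal.span {π ^ e}) X) := by
  rcases eq_or_ne e 0 with rfl | he
  · have : Subsingleton (ℝ[X] ⧸ Ideal.span {π ^ 0}) := by
      rw [Ideal.Quotient.subsingleton_iff, pow_zero, Ideal.span_singleton_one]
    exact ⟨0, Subsingleton.elim _ _⟩
  refine isSquare_mk_X_of_isSquare_root two_ne_zero hπ (fun h0 => he ?_)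
    (AdjoinRoot.isSquare_root_of_forall_neg_not_isRoot hπ fun μ hμ hroot => he ?_) e
  · have hdvd : π ∣ X := by rwa [← AdjoinRoot.mk_eq_zero, AdjoinRoot.mk_X]
    exact h 0 le_rfl (by simpa using hπ.associated_of_dvd irreducible_X hdvd)
  · exact h μ hμ.le ((irreducible_X_sub_C μ).associated_of_dvd hπ (dvd_iff_isRoot.2 hroot)).symm

namespace Module.End

section SquareRootOfScalar

variable {R : Type*} [CommSemiring R] (a : R)

theorem isSquare_algebraMap_congr {M N : Type*} [AddCommMonoid M] [Module R M]
    [AddCommMonoid N] [Module R N] (e : M ≃ₗ[R] N) :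
    IsSquare (algebraMap R (End R M) a) ↔ IsSquare (algebraMap R (End R N) a) :=
  ⟨fun h => by simpa using h.map (e.conjAlgEquiv R),
    fun h => by simpa using h.map (e.symm.conjAlgEquiv R)⟩

theorem isSquare_algebraMap_prod_self (M : Type*) [AddCommMonoid M] [Module R M] :
    IsSquare (algebraMap R (End R (M × M)) a) :=
  ⟨(a • LinearMap.snd R M M).prod (LinearMap.fst R M M), by ext <;> simp⟩

theorem isSquare_algebraMap_pi {ι : Type*} {M : ι → Type*} [∀ i, AddCommMonoid (M i)]
    [∀ i, Module R (M i)] (h : ∀ i, IsSquare (algebraMap R (End R (M i)) a)) :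
    IsSquare (algebraMap R (End R (Π i, M i)) a) := by
  choose g hg using h
  exact ⟨LinearMap.piMap g, by ext v i; simpa using LinearMap.congr_fun (hg i) (v i)⟩

theorem isSquare_algebraMap_fun_of_even_card (F M : Type*) [Finite F] [AddCommMonoid M]
    [Module R M] (hF : Even (Nat.card F)) : IsSquare (algebraMap R (End R (F → M)) a) := by
  obtain ⟨m, hm⟩ := hF
  have e : F ≃ Fin m ⊕ Fin m :=
    (Finite.equivFin F).trans ((finCongr hm).trans finSumFinEquiv.symm)
  rw [isSquare_algebraMap_congr a ((LinearEquiv.funCongrLeft R M e.symm).trans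
    (LinearEquiv.sumArrowLequivProdArrow _ _ R M))]
  exact isSquare_algebraMap_prod_self a _

theorem isSquare_algebraMap_of_isSquare {S : Type*} [CommSemiring S] [Algebra R S]
    (h : IsSquare (algebraMap R S a)) : IsSquare (algebraMap R (End R S) a) := by
  simpa using h.map (Algebra.lmul R S)

theorem isSquare_algebraMap_pi_of_even_card_fiber {ι κ : Type*} [Finite ι] {M : ι → Type*}
    [∀ i, AddCommMonoid (M i)] [∀ i, Module R (M i)] (c : ι → κ)
    (h : ∀ i, IsSquare (algebraMap R (End R (M i)) a) ∨
      (Even (Nat.card {j // c j = c i}) ∧ ∀ j, c j = c i → Nonempty (M j ≃ₗ[R] M i))) :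
    IsSquare (algebraMap R (End R (Π i, M i)) a) := by
  rw [isSquare_algebraMap_congr a
    ((LinearEquiv.piCongrLeft R M (Equiv.sigmaFiberEquiv c)).symm.trans
      (LinearEquiv.piCurry R fun k (j : {j // c j = k}) => M j))]
  refine isSquare_algebraMap_pi a fun k => ?_
  by_cases hk : ∀ j : {j // c j = k}, IsSquare (algebraMap R (End R (M j)) a)
  · exact isSquare_algebraMap_pi a hk
  obtain ⟨⟨i, rfl⟩, hi⟩ := not_forall.1 hk
  obtain ⟨heven, hiso⟩ := (h i).resolve_left hi
  rw [isSquare_algebraMap_congr a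
    (LinearEquiv.piCongrRight fun j : {j // c j = c i} => (hiso j j.2).some)]
  exact isSquare_algebraMap_fun_of_even_card a _ _ heven

end SquareRootOfScalar

end Module.End

theorem Ideal.Quotient.ker_lsmul_eq_bot_of_isCoprime {R S : Type*} [CommRing R] [CommRing S]
    [Algebra R S] {b q : S} (h : IsCoprime b q) :
    LinearMap.ker (Algebra.lsmul R R (S ⧸ Ideal.span {q}) b) = ⊥ :=
  LinearMap.ker_eq_bot.2 (Ideal.Quotient.isUnit_mk_of_isCoprime h).mul_right_injective

theorem LinearMap.finrank_ker_lsmul_congr {R A M N : Type*} [CommSemiring R] [Semiring A]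
    [Algebra R A] [AddCommMonoid M] [Module R M] [Module A M] [IsScalarTower R A M]
    [AddCommMonoid N] [Module R N] [Module A N] [IsScalarTower R A N]
    (e : M ≃ₗ[A] N) (a : A) :
    finrank R (ker (Algebra.lsmul R R M a)) = finrank R (ker (Algebra.lsmul R R N a)) := by
  have hmap : (ker (Algebra.lsmul R R M a)).map (e.restrictScalars R : M →ₗ[R] N) =
      ker (Algebra.lsmul R R N a) := by
    ext x
    simp only [Submodule.mem_map_equiv, mem_ker, Algebra.lsmul_coe]
    rw [LinearEquiv.restrictScalars_symm_apply, ← map_smul, LinearEquiv.map_eq_zero_iff]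
  rw [← hmap, LinearEquiv.finrank_map_eq]

theorem LinearMap.finrank_ker_lsmul_pi {K A ι : Type*} [Field K] [Semiring A] [Algebra K A]
    [Fintype ι] (M : ι → Type*) [∀ i, AddCommGroup (M i)] [∀ i, Module K (M i)]
    [∀ i, Module A (M i)] [∀ i, IsScalarTower K A (M i)] [∀ i, FiniteDimensional K (M i)]
    (a : A) :
    finrank K (ker (Algebra.lsmul K K (Π i, M i) a)) =
      ∑ i, finrank K (ker (Algebra.lsmul K K (M i) a)) := by
  let e : ker (Algebra.lsmul K K (Π i, M i) a) ≃ₗ[K]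
      Π i, ker (Algebra.lsmul K K (M i) a) :=
    { toFun v i := ⟨v.1 i, mem_ker.2 (congr_fun (mem_ker.1 v.2) i)⟩
      invFun w := ⟨fun i => w i, mem_ker.2 (funext fun i => mem_ker.1 (w i).2)⟩
      map_add' _ _ := rfl
      map_smul' _ _ := rfl }
  rw [e.finrank_eq, finrank_pi_fintype]

theorem Module.AEval'.finrank_ker_lsmul {K V : Type*} [Field K] [AddCommGroup V] [Module K V]
    (f : End K V) (p : K[X]) :
    finrank K (LinearMap.ker (Algebra.lsmul K K (AEval' f) p)) =
      finrank K (LinearMap.ker (aeval f p)) := by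
  have hmap : (LinearMap.ker (aeval f p)).map (AEval'.of f : V →ₗ[K] AEval' f) =
      LinearMap.ker (Algebra.lsmul K K (AEval' f) p) := by
    ext x
    simp only [Submodule.mem_map_equiv, LinearMap.mem_ker, Algebra.lsmul_coe]
    rw [← LinearEquiv.map_eq_zero_iff (AEval'.of f).symm, AEval.of_symm_smul]
    rfl
  rw [← hmap, LinearEquiv.finrank_map_eq]

theorem pow_sub_min_dvd_of_pow_dvd_pow_mul {M : Type*} [CommMonoidWithZero M] [IsCancelMulZero M]
    {a q : M} (ha : a ≠ 0) {k e : ℕ} (h : a ^ e ∣ a ^ k * q) : a ^ (e - min k e) ∣ q := by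
  rcases le_total k e with hke | hke
  · rw [min_eq_left hke]
    rw [← Nat.add_sub_cancel' hke, pow_add] at h
    exact (mul_dvd_mul_iff_left (pow_ne_zero k ha)).1 h
  · rw [min_eq_right hke, Nat.sub_self, pow_zero]
    exact one_dvd q

section CyclicModules

variable {K : Type*} [Field K]

theorem Polynomial.finrank_quotient_span_singleton {p : K[X]} (hp : p ≠ 0) :
    finrank K (K[X] ⧸ Ideal.span {p}) = p.natDegree := by
  change finrank K (AdjoinRoot p) = _
  rw [(AdjoinRoot.powerBasis hp).finrank, AdjoinRoot.powerBasis_dim]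

theorem Polynomial.finrank_ker_lsmul_pow_quotient {a : K[X]} (ha : a ≠ 0) (k e : ℕ) :
    finrank K (LinearMap.ker (Algebra.lsmul K K (K[X] ⧸ Ideal.span {a ^ e}) (a ^ k))) =
      min k e * a.natDegree := by
  obtain ⟨c, hc⟩ : ∃ c, min k e = c := ⟨_, rfl⟩
  rw [hc]
  have hmk (p q : K[X]) : p • Ideal.Quotient.mk (Ideal.span {a ^ e}) q =
      Ideal.Quotient.mk _ (p * q) := rfl
  -- multiplication by `a ^ (e - c)` identifies `K[X] ⧸ (a ^ c)` with the kernel of `a ^ k`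
  let Φ : K[X] →ₗ[K[X]] K[X] ⧸ Ideal.span {a ^ e} :=
    (Submodule.mkQ _).comp (LinearMap.mulLeft K[X] (a ^ (e - c)))
  have hΦ (q : K[X]) : Φ q = Ideal.Quotient.mk _ (a ^ (e - c) * q) := rfl
  have hpow : a ^ e = a ^ (e - c) * a ^ c := by
    rw [← pow_add, Nat.sub_add_cancel (hc ▸ min_le_right k e)]
  have hker : LinearMap.ker Φ = Ideal.span {a ^ c} := by
    ext q
    rw [LinearMap.mem_ker, hΦ, Ideal.Quotient.eq_zero_iff_mem, Ideal.mem_span_singleton,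
      Ideal.mem_span_singleton, hpow, mul_dvd_mul_iff_left (pow_ne_zero _ ha)]
  have hrange : (LinearMap.range Φ).restrictScalars K =
      LinearMap.ker (Algebra.lsmul K K (K[X] ⧸ Ideal.span {a ^ e}) (a ^ k)) := by
    ext x
    simp only [Submodule.restrictScalars_mem, LinearMap.mem_range, LinearMap.mem_ker,
      Algebra.lsmul_coe]
    constructor
    · rintro ⟨y, rfl⟩
      rw [hΦ, hmk, Ideal.Quotient.eq_zero_iff_mem, Ideal.mem_span_singleton, ← mul_assoc,
        ← pow_add]
      exact (pow_dvd_pow a (by omega)).mul_right y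
    · intro hx
      obtain ⟨q, rfl⟩ := Ideal.Quotient.mk_surjective x
      rw [hmk, Ideal.Quotient.eq_zero_iff_mem, Ideal.mem_span_singleton] at hx
      obtain ⟨y, rfl⟩ : a ^ (e - c) ∣ q := hc ▸ pow_sub_min_dvd_of_pow_dvd_pow_mul ha hx
      exact ⟨y, rfl⟩
  rw [← hrange, ← natDegree_pow, ← finrank_quotient_span_singleton (pow_ne_zero c ha), ← hker]
  exact ((LinearMap.quotKerEquivRange Φ).restrictScalars K).finrank_eq.symm

open scoped Classical in
theorem Polynomial.finrank_ker_lsmul_X_sub_C_pow_quotient {π : K[X]} (hπ : Irreducible π)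
    (e k : ℕ) (μ : K) :
    finrank K (LinearMap.ker (Algebra.lsmul K K (K[X] ⧸ Ideal.span {π ^ e}) ((X - C μ) ^ k))) =
      if Associated π (X - C μ) then min k e else 0 := by
  split_ifs with h
  · have hspan : Ideal.span {π ^ e} = Ideal.span {(X - C μ) ^ e} :=
      Ideal.span_singleton_eq_span_singleton.2 h.pow_pow
    rw [LinearMap.finrank_ker_lsmul_congr (Submodule.quotEquivOfEq _ _ hspan),
      finrank_ker_lsmul_pow_quotient (X_sub_C_ne_zero μ), natDegree_X_sub_C, mul_one]
  · have hcop : IsCoprime (X - C μ) π := (irreducible_X_sub_C μ).coprime_iff_not_dvd.2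
      fun hdvd => h ((irreducible_X_sub_C μ).associated_of_dvd hπ hdvd).symm
    rw [Ideal.Quotient.ker_lsmul_eq_bot_of_isCoprime (hcop.pow (m := k) (n := e)), finrank_bot]

end CyclicModules

namespace Module.End

section JordanBlocks

variable {K V : Type*} [Field K] [AddCommGroup V] [Module K V]

/-- For `r ≥ 1`, the number of Jordan blocks `J_r(μ)` of `f`, written with the nullities
`dim ker (f - μ) ^ k` in place of the ranks `rank (f - μ) ^ k`. -/
noncomputable def jordanBlockCount (f : End K V) (μ : K) (r : ℕ) : ℤ :=
  2 * finrank K (f.genEigenspace μ r) - finrank K (f.genEigenspace μ (r - 1 : ℕ)) -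
    finrank K (f.genEigenspace μ (r + 1 : ℕ))

variable {ι : Type*} [Fintype ι] (f : End K V) {π : ι → K[X]} (hπ : ∀ i, Irreducible (π i))
  {e : ι → ℕ} (E : AEval' f ≃ₗ[K[X]] Π i, K[X] ⧸ Ideal.span {π i ^ e i})
include hπ E

open scoped Classical in
theorem finrank_genEigenspace_eq_sum (μ : K) (k : ℕ) :
    finrank K (f.genEigenspace μ k) =
      ∑ i, if Associated (π i) (X - C μ) then min k (e i) else 0 := by
  have (i : ι) : FiniteDimensional K (K[X] ⧸ Ideal.span {π i ^ e i}) :=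
    (AdjoinRoot.powerBasis (pow_ne_zero _ (hπ i).ne_zero)).finite
  have hpow : (f - μ • 1) ^ k = aeval f ((X - C μ) ^ k) := by
    simp [Algebra.algebraMap_eq_smul_one]
  rw [genEigenspace_nat, hpow, ← AEval'.finrank_ker_lsmul, LinearMap.finrank_ker_lsmul_congr E,
    LinearMap.finrank_ker_lsmul_pi]
  simp_rw [finrank_ker_lsmul_X_sub_C_pow_quotient (hπ _)]

open scoped Classical in
theorem jordanBlockCount_eq_card (μ : K) {r : ℕ} (hr : 1 ≤ r) :
    f.jordanBlockCount μ r = #{i | Associated (π i) (X - C μ) ∧ e i = r} := by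
  rw [jordanBlockCount, finrank_genEigenspace_eq_sum f hπ E, finrank_genEigenspace_eq_sum f hπ E,
    finrank_genEigenspace_eq_sum f hπ E, Finset.card_filter]
  push_cast
  rw [Finset.mul_sum, ← Finset.sum_sub_distrib, ← Finset.sum_sub_distrib]
  refine Finset.sum_congr rfl fun i _ => ?_
  by_cases h : Associated (π i) (X - C μ)
  · simp only [h, true_and, if_true]
    split_ifs <;> omega
  · simp [h]

theorem hasEigenvalue_of_associated {μ : K} {i : ι} (hi : Associated (π i) (X - C μ))
    (he : e i ≠ 0) : f.HasEigenvalue μ := by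
  classical
  change f.genEigenspace μ (1 : ℕ) ≠ ⊥
  intro hbot
  have hsum := finrank_genEigenspace_eq_sum f hπ E μ 1
  rw [hbot, finrank_bot, eq_comm, Finset.sum_eq_zero_iff] at hsum
  have := hsum i (Finset.mem_univ i)
  rw [if_pos hi] at this
  omega

end JordanBlocks

section Real

variable {V : Type*} [AddCommGroup V] [Module ℝ V] [FiniteDimensional ℝ V]

theorem even_finrank_of_isNilpotent_algebraMap_sub_mul_self (g : End ℝ V) {μ : ℝ} (hμ : μ < 0)
    (h : IsNilpotent (algebraMap ℝ (End ℝ V) μ - g * g)) : Even (finrank ℝ V) := by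
  have hdet : LinearMap.det (g * g) = μ ^ finrank ℝ V := by
    have := LinearMap.eval_charpoly (algebraMap ℝ (End ℝ V) μ - g * g) μ
    rwa [h.charpoly_eq_X_pow_finrank, sub_sub_cancel, eval_pow, eval_X, eq_comm] at this
  by_contra hodd
  have hsq : 0 ≤ LinearMap.det (g * g) := by rw [map_mul]; exact mul_self_nonneg _
  rw [hdet] at hsq
  exact (Nat.not_even_iff_odd.1 hodd).pow_neg hμ |>.not_ge hsq

theorem even_finrank_genEigenspace_mul_self (y : End ℝ V) {μ : ℝ} (hμ : μ < 0) (k : ℕ) :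
    Even (finrank ℝ ((y * y).genEigenspace μ k)) := by
  have hy := mapsTo_genEigenspace_of_comm ((Commute.refl y).mul_left (Commute.refl y)) μ k
  refine even_finrank_of_isNilpotent_algebraMap_sub_mul_self (y.restrict hy) hμ ?_
  have hrestrict : algebraMap ℝ _ μ - y.restrict hy * y.restrict hy =
      -(y * y - algebraMap ℝ (End ℝ V) μ).restrict
        (mapsTo_genEigenspace_of_comm (Algebra.mul_sub_algebraMap_commutes _ μ) μ k) := by
    ext
    simp [Algebra.algebraMap_eq_smul_one]
    rfl
  rw [hrestrict]
  exact (isNilpotent_restrict_sub_algebraMap (y * y) μ k).neg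

theorem even_jordanBlockCount_of_isSquare {f : End ℝ V} (hf : IsSquare f) {μ : ℝ} (hμ : μ < 0)
    (r : ℕ) : Even (f.jordanBlockCount μ r) := by
  obtain ⟨y, rfl⟩ := hf
  have heven (k : ℕ) : Even (finrank ℝ ((y * y).genEigenspace μ k) : ℤ) :=
    (Int.even_coe_nat _).2 (even_finrank_genEigenspace_mul_self y hμ k)
  exact ((even_two_mul _).sub (heven _)).sub (heven _)

end Real

end Module.End

theorem Module.AEval'.isTorsion {K V : Type*} [Field K] [AddCommGroup V] [Module K V]
    [FiniteDimensional K V] (f : End K V) : IsTorsion K[X] (AEval' f) := fun v =>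
  ⟨⟨f.charpoly, mem_nonZeroDivisors_of_ne_zero f.charpoly_monic.ne_zero⟩,
    (AEval'.of f).symm.injective (by simp [LinearMap.aeval_self_charpoly])⟩

theorem Module.AEval'.isSquare_of_isSquare_algebraMap {K V : Type*} [CommSemiring K]
    [AddCommMonoid V] [Module K V] {f : End K V}
    (h : IsSquare (algebraMap K[X] (End K[X] (AEval' f)) X)) : IsSquare f := by
  obtain ⟨g, hg⟩ := h
  refine ⟨(AEval'.of f).symm.toLinearMap ∘ₗ g.restrictScalars K ∘ₗ (AEval'.of f).toLinearMap, ?_⟩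
  ext v
  have := LinearMap.congr_fun hg (AEval'.of f v)
  simp only [Module.algebraMap_end_apply, Module.End.mul_apply] at this
  simp [← this, AEval'.X_smul_of]

open scoped Classical in
theorem Associates.natCard_fiber_mk_prod {ι M : Type*} [Fintype ι] [Monoid M] {p : ι → M}
    {e : ι → ℕ} {i : ι} {q : M} (hi : Associated (p i) q) :
    Nat.card {j // (Associates.mk (p j), e j) = (Associates.mk (p i), e i)} =
      #{j | Associated (p j) q ∧ e j = e i} := by
  rw [Nat.card_eq_fintype_card, Fintype.card_subtype]
  congr 1
  ext j
  simp only [Finset.mem_filter, Finset.mem_univ, true_and, Prod.mk.injEq,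
    Associates.mk_eq_mk_iff_associated]
  exact and_congr_left fun _ => ⟨fun h => h.trans hi, fun h => h.trans hi.symm⟩

theorem Module.End.isSquare_of_even_jordanBlockCount {V : Type*} [AddCommGroup V] [Module ℝ V]
    [FiniteDimensional ℝ V] {f : End ℝ V} (hf : IsUnit f)
    (h : ∀ μ < 0, f.HasEigenvalue μ → ∀ r, 1 ≤ r → Even (f.jordanBlockCount μ r)) :
    IsSquare f := by
  obtain ⟨ι, _, π, hπ, e, ⟨E₀⟩⟩ := Module.equiv_directSum_of_isTorsion (AEval'.isTorsion f)
  let E : AEval' f ≃ₗ[ℝ[X]] Π i, ℝ[X] ⧸ Ideal.span {π i ^ e i} :=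
    E₀.trans (DirectSum.linearEquivFunOnFintype _ _ _)
  have hzero : ¬ f.HasEigenvalue 0 := by
    rw [hasEigenvalue_iff, eigenspace_zero, ne_eq, not_not, LinearMap.ker_eq_bot]
    exact ((isUnit_iff f).1 hf).1
  refine AEval'.isSquare_of_isSquare_algebraMap ((isSquare_algebraMap_congr _ E).2 ?_)
  refine isSquare_algebraMap_pi_of_even_card_fiber _ (fun i => (Associates.mk (π i), e i))
    fun i => ?_
  by_cases hneg : ∃ μ < 0, Associated (π i) (X - C μ) ∧ e i ≠ 0
  · obtain ⟨μ, hμ, hi, he⟩ := hneg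
    right
    refine ⟨?_, fun j hj => ⟨Submodule.quotEquivOfEq _ _ ?_⟩⟩
    · have heven := h μ hμ (hasEigenvalue_of_associated f hπ E hi he) (e i) (by omega)
      rw [jordanBlockCount_eq_card f hπ E μ (by omega), Int.even_coe_nat] at heven
      rw [Associates.natCard_fiber_mk_prod hi]
      convert heven
    · simp only [Prod.mk.injEq, Associates.mk_eq_mk_iff_associated] at hj
      rw [hj.2]
      exact Ideal.span_singleton_eq_span_singleton.2 hj.1.pow_pow
  · left
    refine isSquare_algebraMap_of_isSquare _ ?_
    rw [Ideal.Quotient.algebraMap_eq]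
    refine isSquare_mk_X_of_forall_nonpos_associated (hπ i) fun μ hμ hi => ?_
    by_contra he
    rcases hμ.lt_or_eq with hμ | rfl
    · exact hneg ⟨μ, hμ, hi, he⟩
    · exact hzero (hasEigenvalue_of_associated f hπ E hi he)

namespace Matrix

variable {K n : Type*} [Field K] [Fintype n] [DecidableEq n]

theorem rank_pow_sub_smul_add_finrank_genEigenspace (A : Matrix n n K) (μ : K) (k : ℕ) :
    ((A - μ • (1 : Matrix n n K)) ^ k).rank +
      finrank K (Module.End.genEigenspace (toLinAlgEquiv' A) μ k) = Fintype.card n := by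
  have hlin : ((A - μ • (1 : Matrix n n K)) ^ k).mulVecLin = (toLinAlgEquiv' A - μ • 1) ^ k := by
    rw [← map_one toLinAlgEquiv', ← map_smul, ← map_sub, ← map_pow]
    rfl
  rw [Module.End.genEigenspace_nat, rank, hlin, LinearMap.finrank_range_add_finrank_ker,
    Module.finrank_fintype_fun_eq_card]

theorem jordanBlockCount_toLinAlgEquiv' (A : Matrix n n K) (μ : K) (r : ℕ) :
    Module.End.jordanBlockCount (toLinAlgEquiv' A) μ r =
      (((A - μ • (1 : Matrix n n K)) ^ (r - 1)).rank : ℤ)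
        - 2 * (((A - μ • (1 : Matrix n n K)) ^ r).rank : ℤ)
        + (((A - μ • (1 : Matrix n n K)) ^ (r + 1)).rank : ℤ) := by
  have h := rank_pow_sub_smul_add_finrank_genEigenspace A μ
  have h₁ := h (r - 1)
  have h₂ := h r
  have h₃ := h (r + 1)
  unfold Module.End.jordanBlockCount
  omega

theorem hasEigenvalue_toLinAlgEquiv'_iff (A : Matrix n n K) (μ : K) :
    Module.End.HasEigenvalue (toLinAlgEquiv' A) μ ↔ A.charpoly.IsRoot μ := by
  rw [Module.End.hasEigenvalue_iff_isRoot_charpoly, ← charpoly_toLin']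
  rfl

theorem isSquare_toLinAlgEquiv'_iff (A : Matrix n n K) :
    IsSquare (toLinAlgEquiv' A) ↔ ∃ Y : Matrix n n K, Y ^ 2 = A := by
  have h : IsSquare (toLinAlgEquiv' A) ↔ IsSquare A :=
    ⟨fun h => by simpa using h.map toLinAlgEquiv'.symm, fun h => h.map _⟩
  simp_rw [h, isSquare_iff_exists_sq, eq_comm]

end Matrix

/-- **Existence criterion for real square roots.** A real invertible `n × n` matrix `A`
has a real square root iff, for every `r ≥ 1` and every real eigenvalue `λ < 0` of `A`,
the number of Jordan blocks `J_r(λ)` of `A`, namely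
`rank((A − λI)^{r−1}) − 2·rank((A − λI)^r) + rank((A − λI)^{r+1})`, is even. -/
theorem real_sqrt_exists_iff (n : ℕ) (A : Matrix (Fin n) (Fin n) ℝ) (hA : IsUnit A) :
    (∃ X : Matrix (Fin n) (Fin n) ℝ, X ^ 2 = A) ↔
      (∀ r : ℕ, 1 ≤ r → ∀ lam : ℝ, lam < 0 → A.charpoly.IsRoot lam →
        Even ((((A - lam • (1 : Matrix (Fin n) (Fin n) ℝ)) ^ (r - 1)).rank : ℤ)
          - 2 * (((A - lam • (1 : Matrix (Fin n) (Fin n) ℝ)) ^ r).rank : ℤ)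
          + (((A - lam • (1 : Matrix (Fin n) (Fin n) ℝ)) ^ (r + 1)).rank : ℤ))) := by
  simp_rw [← Matrix.isSquare_toLinAlgEquiv'_iff, ← Matrix.jordanBlockCount_toLinAlgEquiv',
    ← Matrix.hasEigenvalue_toLinAlgEquiv'_iff]
  constructor
  · intro hsq r _ μ hμ _
    exact Module.End.even_jordanBlockCount_of_isSquare hsq hμ r
  · intro h
    exact Module.End.isSquare_of_even_jordanBlockCount (hA.map _) fun μ hμ hμA r hr =>
      h r hr μ hμ hμA
end

section
/- Let H(n) denote the set of real n×n matrices all of whose eigenvalues (complex roots of the characteristic polynomial) have positive real part. Then the squaring map is injective on H(n): if X₁, X₂ ∈ H(n) and X₁² = X₂², then X₁ = X₂. -/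
open Matrix

/-!
If `X₁² = X₂²`, then `D = X₁ - X₂` solves the Sylvester equation `X₁ D = D (-X₂)`. The spectra
of `X₁` and `-X₂` lie in opposite open half-planes, hence are disjoint, and a Sylvester equation
`A D = D B` with `σ A ∩ σ B = ∅` only has the solution `D = 0`: it gives `χ_A(A) D = D χ_A(B)`,
where `χ_A(A) = 0` by Cayley–Hamilton and `χ_A(B)` is invertible by spectral mapping.
-/

open Polynomial

theorem SemiconjBy.aeval {R A : Type*} [CommSemiring R] [Semiring A] [Algebra R A] {a x y : A}
    (h : SemiconjBy a x y) (p : R[X]) : SemiconjBy a (aeval x p) (aeval y p) := by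
  induction p using Polynomial.induction_on' with
  | add p q hp hq => simpa only [map_add] using hp.add_right hq
  | monomial k c =>
    simpa only [aeval_monomial] using
      SemiconjBy.mul_right (Algebra.commute_algebraMap_left c a).symm (h.pow_right k)

theorem Matrix.eq_zero_of_mul_eq_mul_of_disjoint_spectrum {K ι : Type*} [Field K] [IsAlgClosed K]
    [Fintype ι] [DecidableEq ι] {A B D : Matrix ι ι K} (h : A * D = D * B)
    (hAB : Disjoint (spectrum K A) (spectrum K B)) : D = 0 := by
  nontriviality Matrix ι ι K
  have hD : D * aeval B A.charpoly = 0 := by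
    rw [(SemiconjBy.aeval h.symm A.charpoly).eq, aeval_self_charpoly, zero_mul]
  have hunit : IsUnit (aeval B A.charpoly) := by
    rw [← spectrum.zero_notMem_iff K, spectrum.map_polynomial_aeval_of_nonempty _ _
      (spectrum.nonempty_of_isAlgClosed_of_finiteDimensional K B)]
    rintro ⟨z, hzB, hz⟩
    exact hAB.notMem_of_mem_right hzB (mem_spectrum_iff_isRoot_charpoly.mpr hz)
  simpa using hunit.mul_left_eq_zero.mp hD

theorem mem_spectrum_map_complex_iff_eigR {n : ℕ} (X : Matrix (Fin n) (Fin n) ℝ) (z : ℂ) :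
    z ∈ spectrum ℂ (X.map (algebraMap ℝ ℂ)) ↔ eigR X z := by
  rw [mem_spectrum_iff_isRoot_charpoly, charpoly_map, eigR]

/-- **Injectivity of squaring on `H(n)`.** The squaring map `X ↦ X²` is injective on
the set of real `n × n` matrices all of whose eigenvalues have positive real part. -/
theorem sq_injOn_halfplane (n : ℕ) :
    Set.InjOn (fun X : Matrix (Fin n) (Fin n) ℝ => X ^ 2)
      {X : Matrix (Fin n) (Fin n) ℝ | ∀ z : ℂ, eigR X z → 0 < z.re} := by
  intro X₁ hX₁ X₂ hX₂ hsq
  let φ := (algebraMap ℝ ℂ).mapMatrix (m := Fin n)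
  have hsq' : φ X₁ * φ X₁ = φ X₂ * φ X₂ := by
    rw [← sq, ← sq, ← map_pow, ← map_pow]
    exact congrArg φ hsq
  have hsylv : φ X₁ * (φ X₁ - φ X₂) = (φ X₁ - φ X₂) * -φ X₂ := by
    rw [mul_sub, sub_mul, mul_neg, mul_neg, hsq']
    abel
  have hdisj : Disjoint (spectrum ℂ (φ X₁)) (spectrum ℂ (-φ X₂)) := by
    rw [← spectrum.neg_eq, Set.disjoint_left]
    intro z h₁ h₂
    have hre₁ := hX₁ z ((mem_spectrum_map_complex_iff_eigR X₁ z).mp h₁)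
    have hre₂ := hX₂ (-z) ((mem_spectrum_map_complex_iff_eigR X₂ (-z)).mp h₂)
    rw [Complex.neg_re] at hre₂
    linarith
  exact Matrix.map_injective (algebraMap ℝ ℂ).injective
    (sub_eq_zero.mp (eq_zero_of_mul_eq_mul_of_disjoint_spectrum hsylv hdisj))
end
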